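/- arXiv:2509.04654 — 6 statements merged into one kernel-verified Lean document; each statement's English description precedes it below -/
import Mathlib

section
/- Let i ∈ {1, …, n} and let ℓ be a proper horizontal line lying in the region H_i of the horizontal strip partition of a BL packing. Then every unoccupied gap of ℓ has width strictly less than w_{r_i}. -/
open scoped Classical
open MeasureTheory

/-- An axis-parallel rectangle, given by its width and its height. -/
structure Rect where
  w : ℝ
  h : ℝ

/-- A Strip Packing instance: a strip of width `W > 0` and `n` rectangles
`r 0, …, r (n-1)`, each with positive height and width at most `W`. -/
structure SPInstance (n : ℕ) where
  W : ℝ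
  r : Fin n → Rect
  W_pos : 0 < W
  w_pos : ∀ i, 0 < (r i).w
  w_le_W : ∀ i, (r i).w ≤ W
  h_pos : ∀ i, 0 < (r i).h

/-- The open box of rectangle `R` placed at position `p`. -/
def openBox (R : Rect) (p : ℝ × ℝ) : Set (ℝ × ℝ) :=
  Set.Ioo p.1 (p.1 + R.w) ×ˢ Set.Ioo p.2 (p.2 + R.h)

/-- The closed box of rectangle `R` placed at position `p`. -/
def closedBox (R : Rect) (p : ℝ × ℝ) : Set (ℝ × ℝ) :=
  Set.Icc p.1 (p.1 + R.w) ×ˢ Set.Icc p.2 (p.2 + R.h)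

namespace SPInstance

variable {n : ℕ}

/-- Rectangle `i` placed at `p` lies inside the strip. -/
def InStrip (I : SPInstance n) (i : Fin n) (p : ℝ × ℝ) : Prop :=
  0 ≤ p.1 ∧ p.1 + (I.r i).w ≤ I.W ∧ 0 ≤ p.2

/-- `pos` is a feasible packing: each rectangle lies in the strip and the open
boxes are pairwise disjoint. -/
def Feasible (I : SPInstance n) (pos : Fin n → ℝ × ℝ) : Prop :=
  (∀ i, I.InStrip i (pos i)) ∧
    Pairwise (fun i j : Fin n =>
      Disjoint (openBox (I.r i) (pos i)) (openBox (I.r j) (pos j)))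

/-- The height of a packing, `max_i (y_i + h_i)`. -/
noncomputable def height (I : SPInstance n) (pos : Fin n → ℝ × ℝ) : ℝ :=
  ⨆ i, ((pos i).2 + (I.r i).h)

/-- The minimum height of a feasible packing. -/
noncomputable def hOPT (I : SPInstance n) : ℝ :=
  sInf {H | ∃ pos, I.Feasible pos ∧ I.height pos = H}

/-- The maximum height of a rectangle of the instance. -/
noncomputable def hmax (I : SPInstance n) : ℝ :=
  ⨆ i, (I.r i).h

/-- Rectangle `i` can feasibly be placed at `p`, given the rectangles
`j < i` already placed at `pos j`. -/
def FeasibleAt (I : SPInstance n) (pos : Fin n → ℝ × ℝ) (i : Fin n) (p : ℝ × ℝ) : Prop :=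
  I.InStrip i p ∧ ∀ j : Fin n, j < i →
    Disjoint (openBox (I.r i) p) (openBox (I.r j) (pos j))

/-- `pos` is the Bottom-Left packing for the ordering `r 0, r 1, …`: every
rectangle is feasibly placed, at the lexicographically minimal `(y, x)`. -/
def IsBL (I : SPInstance n) (pos : Fin n → ℝ × ℝ) : Prop :=
  ∀ i : Fin n, I.FeasibleAt pos i (pos i) ∧
    ∀ p : ℝ × ℝ, I.FeasibleAt pos i p →
      (pos i).2 < p.2 ∨ ((pos i).2 = p.2 ∧ (pos i).1 ≤ p.1)

/-- Greedy construction of the set `F` of the FQW-partition, processing the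
rectangles in the order `σ 0, σ 1, …` and adding a rectangle whenever the
total width of `F` stays at most `W`. -/
noncomputable def greedyF (I : SPInstance n) (σ : Equiv.Perm (Fin n)) : Finset (Fin n) :=
  (List.finRange n).foldl
    (fun F k =>
      if (I.r (σ k)).w + ∑ f ∈ F, (I.r f).w ≤ I.W then insert (σ k) F else F) ∅

end SPInstance

/-- An FQW-partition datum: a processing order `σ` of the rectangles that is
sorted by decreasing height. -/
structure FQW {n : ℕ} (I : SPInstance n) where
  σ : Equiv.Perm (Fin n)
  sorted : ∀ k k' : Fin n, k ≤ k' → (I.r (σ k')).h ≤ (I.r (σ k)).h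

namespace FQW

variable {n : ℕ} {I : SPInstance n}

/-- The set `F` of the FQW-partition. -/
noncomputable def F (d : FQW I) : Finset (Fin n) := I.greedyF d.σ

/-- The set `𝒲` of the FQW-partition: rectangles not in `F` of width
greater than `W/2`. -/
noncomputable def Wset (d : FQW I) : Finset (Fin n) :=
  Finset.univ.filter fun i => i ∉ d.F ∧ I.W / 2 < (I.r i).w

/-- The set `Q` of the FQW-partition: all remaining rectangles. -/
noncomputable def Q (d : FQW I) : Finset (Fin n) :=
  Finset.univ.filter fun i => i ∉ d.F ∧ ¬ I.W / 2 < (I.r i).w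

/-- The rectangles of the instance are listed in the FQW-ordering: first `F`
sorted by decreasing height, then `Q` sorted by decreasing width, then `𝒲`. -/
def IsOrdered (d : FQW I) : Prop :=
  (∀ i : Fin n, i ∈ d.F ↔ (i : ℕ) < d.F.card) ∧
  (∀ i : Fin n, i ∈ d.Q ↔ d.F.card ≤ (i : ℕ) ∧ (i : ℕ) < d.F.card + d.Q.card) ∧
  (∀ i j : Fin n, (i : ℕ) ≤ (j : ℕ) → (j : ℕ) < d.F.card → (I.r j).h ≤ (I.r i).h) ∧
  (∀ i j : Fin n, d.F.card ≤ (i : ℕ) → (i : ℕ) ≤ (j : ℕ) →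
    (j : ℕ) < d.F.card + d.Q.card → (I.r j).w ≤ (I.r i).w)

end FQW

/-- `max {y_{r_1}, …, y_{r_i}}` (the first `i` rectangles, `0` if `i = 0`):
the lower boundary of the region `H_{i+1}` of the horizontal strip partition. -/
noncomputable def maxYBelow {n : ℕ} (pos : Fin n → ℝ × ℝ) (i : ℕ) : ℝ :=
  ⨆ j : {j : Fin n // (j : ℕ) < i}, (pos (j : Fin n)).2

namespace SPInstance

variable {n : ℕ}

/-- The horizontal line at height `t` is proper: it meets no top or
bottom face of a rectangle. -/
def ProperLine (I : SPInstance n) (pos : Fin n → ℝ × ℝ) (t : ℝ) : Prop :=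
  ∀ j : Fin n, t ≠ (pos j).2 ∧ t ≠ (pos j).2 + (I.r j).h

/-- Rectangle `j` intersects the horizontal line at height `t`. -/
def Intersects (I : SPInstance n) (pos : Fin n → ℝ × ℝ) (j : Fin n) (t : ℝ) : Prop :=
  (pos j).2 < t ∧ t < (pos j).2 + (I.r j).h

/-- The occupied part of the horizontal line at height `t`. -/
noncomputable def occupied (I : SPInstance n) (pos : Fin n → ℝ × ℝ) (t : ℝ) : Set ℝ :=
  ⋃ j ∈ {j : Fin n | I.Intersects pos j t}, Set.Icc (pos j).1 ((pos j).1 + (I.r j).w)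

/-- The occupied fraction of the horizontal line at height `t`. -/
noncomputable def occFrac (I : SPInstance n) (pos : Fin n → ℝ × ℝ) (t : ℝ) : ℝ :=
  (volume (I.occupied pos t)).toReal / I.W

/-- The region `H_{i+1}` (for the `0`-based index `i`) of the horizontal strip
partition: `[0, W] × [max {y_{r_1}, …, y_{r_i}}, y_{r_{i+1}})`. -/
def regionH (I : SPInstance n) (pos : Fin n → ℝ × ℝ) (i : Fin n) : Set (ℝ × ℝ) :=
  Set.Icc 0 I.W ×ˢ Set.Ico (maxYBelow pos (i : ℕ)) (pos i).2

/-- `G` is an unoccupied gap of the horizontal line at height `t`: a maximal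
subinterval of `[0, W]` disjoint from the occupied part of the line. -/
def IsGap (I : SPInstance n) (pos : Fin n → ℝ × ℝ) (t : ℝ) (G : Set ℝ) : Prop :=
  G.Nonempty ∧ G ⊆ Set.Icc 0 I.W ∧ G.OrdConnected ∧ Disjoint G (I.occupied pos t) ∧
    ∀ G' : Set ℝ, G'.OrdConnected → G' ⊆ Set.Icc 0 I.W →
      Disjoint G' (I.occupied pos t) → G ⊆ G' → G' = G

/-- `j` is a left supporter of `i`: it comes before `i` in the ordering, its
right face touches the left face of `i`, and their open `y`-ranges intersect. -/
def IsLeftSupporter (I : SPInstance n) (pos : Fin n → ℝ × ℝ) (i j : Fin n) : Prop :=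
  j < i ∧ (pos j).1 + (I.r j).w = (pos i).1 ∧
    (pos j).2 < (pos i).2 + (I.r i).h ∧ (pos i).2 < (pos j).2 + (I.r j).h

/-- `j` is a bottom supporter of `i`: it comes before `i` in the ordering, its
top face touches the bottom face of `i`, and their open `x`-ranges intersect. -/
def IsBottomSupporter (I : SPInstance n) (pos : Fin n → ℝ × ℝ) (i j : Fin n) : Prop :=
  j < i ∧ (pos j).2 + (I.r j).h = (pos i).2 ∧
    (pos j).1 < (pos i).1 + (I.r i).w ∧ (pos i).1 < (pos j).1 + (I.r j).w

/-- `j` is the leftmost bottom supporter of `i`. -/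
def IsLeftmostBottomSupporter (I : SPInstance n) (pos : Fin n → ℝ × ℝ)
    (i j : Fin n) : Prop :=
  I.IsBottomSupporter pos i j ∧
    ∀ j' : Fin n, I.IsBottomSupporter pos i j' → (pos j).1 ≤ (pos j').1

end SPInstance

/-- `iT` is the top rectangle `r_T` of `Q`: the rectangle of `Q` whose top face
is highest, ties broken by highest bottom face. -/
def IsTopRect {n : ℕ} (I : SPInstance n) (d : FQW I) (pos : Fin n → ℝ × ℝ)
    (iT : Fin n) : Prop :=
  iT ∈ d.Q ∧ ∀ j ∈ d.Q,
    (pos j).2 + (I.r j).h < (pos iT).2 + (I.r iT).h ∨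
    ((pos j).2 + (I.r j).h = (pos iT).2 + (I.r iT).h ∧ (pos j).2 ≤ (pos iT).2)

/-- `iL` is the left rectangle `r_L` of `Q`: the first rectangle of `Q` in the
ordering touching the left strip boundary, and `r_T` if there is none. -/
def IsLeftRect {n : ℕ} (I : SPInstance n) (d : FQW I) (pos : Fin n → ℝ × ℝ)
    (iT iL : Fin n) : Prop :=
  (iL ∈ d.Q ∧ (pos iL).1 = 0 ∧ ∀ j ∈ d.Q, (pos j).1 = 0 → iL ≤ j) ∨
  ((∀ j ∈ d.Q, (pos j).1 ≠ 0) ∧ iL = iT)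

/-- The region `H' = [0, W] × ([0, h_{r_T}] ∪ [y_{r_T}, y_{r_T} + h_{r_T}])`. -/
def Hprime {n : ℕ} (I : SPInstance n) (pos : Fin n → ℝ × ℝ) (iT : Fin n) :
    Set (ℝ × ℝ) :=
  Set.Icc 0 I.W ×ˢ
    (Set.Icc 0 (I.r iT).h ∪ Set.Icc (pos iT).2 ((pos iT).2 + (I.r iT).h))

/-- The type `T(ℓ)` of the proper horizontal line at height `t`: the rectangles
of `Q` intersecting the line whose index is smaller than the least index `j`
with `y_{r_j} > t` (equivalently, all rectangles with index at most theirs have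
bottom face at height at most `t`). -/
noncomputable def TypeOf {n : ℕ} (I : SPInstance n) (d : FQW I)
    (pos : Fin n → ℝ × ℝ) (t : ℝ) : Finset (Fin n) :=
  Finset.univ.filter fun i =>
    i ∈ d.Q ∧ I.Intersects pos i t ∧ ∀ j : Fin n, j ≤ i → (pos j).2 ≤ t

/-- `i` is `LM(ℓ)`: the rectangle of `T(ℓ)` with smallest `x`-coordinate. -/
def IsLM {n : ℕ} (I : SPInstance n) (d : FQW I) (pos : Fin n → ℝ × ℝ) (t : ℝ)
    (i : Fin n) : Prop :=
  i ∈ TypeOf I d pos t ∧ ∀ j ∈ TypeOf I d pos t, (pos i).1 ≤ (pos j).1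

/-- The horizontal line at height `t` lies in `H_{a+2} ∪ ⋯ ∪ H_L`, where `iL`
is the `0`-based index of `r_L` (so `L = iL + 1`, `1`-based). -/
def LineInHUnion {n : ℕ} (I : SPInstance n) (d : FQW I) (pos : Fin n → ℝ × ℝ)
    (iL : Fin n) (t : ℝ) : Prop :=
  ∃ m : Fin n, d.F.card + 1 ≤ (m : ℕ) ∧ m ≤ iL ∧
    maxYBelow pos (m : ℕ) ≤ t ∧ t < (pos m).2

/-- The space `H_{a+2} ∪ ⋯ ∪ H_L`, where `iL` is the `0`-based index of `r_L`. -/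
def regionHUnion {n : ℕ} (I : SPInstance n) (d : FQW I) (pos : Fin n → ℝ × ℝ)
    (iL : Fin n) : Set (ℝ × ℝ) :=
  ⋃ m ∈ {m : Fin n | d.F.card + 1 ≤ (m : ℕ) ∧ m ≤ iL}, I.regionH pos m

/-- The horizontal line at height `t` belongs to `L^k`: it is a proper line of
order `k` lying in `H_{a+2} ∪ ⋯ ∪ H_L`. -/
def InLk {n : ℕ} (I : SPInstance n) (d : FQW I) (pos : Fin n → ℝ × ℝ)
    (iL : Fin n) (k : ℕ) (t : ℝ) : Prop :=
  I.ProperLine pos t ∧ LineInHUnion I d pos iL t ∧ (TypeOf I d pos t).card = k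

/-- `i` belongs to `R^k`: it is `LM(ℓ)` for some line `ℓ ∈ L^k`. -/
def InRk {n : ℕ} (I : SPInstance n) (d : FQW I) (pos : Fin n → ℝ × ℝ)
    (iL : Fin n) (k : ℕ) (i : Fin n) : Prop :=
  ∃ t : ℝ, InLk I d pos iL k t ∧ IsLM I d pos t i

/-- `i` is `LM^k`: the rectangle of `R^k` with smallest `x`-coordinate,
ties broken by largest `y`-coordinate. -/
def IsLMk {n : ℕ} (I : SPInstance n) (d : FQW I) (pos : Fin n → ℝ × ℝ)
    (iL : Fin n) (k : ℕ) (i : Fin n) : Prop :=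
  InRk I d pos iL k i ∧ ∀ j : Fin n, InRk I d pos iL k j →
    (pos i).1 < (pos j).1 ∨ ((pos i).1 = (pos j).1 ∧ (pos j).2 ≤ (pos i).2)

/-- `v = x_F^ℓ` for the line `ℓ` at height `t`: the right face `x + w` of the
rightmost rectangle of `F` intersecting `ℓ`, and `0` if there is none. -/
def IsXF {n : ℕ} (I : SPInstance n) (d : FQW I) (pos : Fin n → ℝ × ℝ)
    (t v : ℝ) : Prop :=
  ((∃ f ∈ d.F, I.Intersects pos f t ∧ v = (pos f).1 + (I.r f).w) ∧
    ∀ f ∈ d.F, I.Intersects pos f t → (pos f).1 + (I.r f).w ≤ v) ∨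
  ((∀ f ∈ d.F, ¬ I.Intersects pos f t) ∧ v = 0)


/-- **Lemma (gap width).** Every unoccupied gap of a proper horizontal line in
the region `H_i` of the horizontal strip partition of a BL packing has width
strictly less than `w_{r_i}`. -/
theorem gap_width_lt {n : ℕ} (I : SPInstance n) (pos : Fin n → ℝ × ℝ)
    (hBL : I.IsBL pos) (i : Fin n) (t : ℝ) (hproper : I.ProperLine pos t)
    (hlow : maxYBelow pos (i : ℕ) ≤ t) (hhigh : t < (pos i).2)
    (G : Set ℝ) (hG : I.IsGap pos t G) :
    sSup G - sInf G < (I.r i).w := by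
  by_contra hcon
  push_neg at hcon
  obtain ⟨hne, hsub, hord, hdisj, -⟩ := hG
  set a := sInf G with ha
  set b := sSup G with hb
  have ha0 : 0 ≤ a := le_csInf hne fun x hx => (hsub hx).1
  have hbW : b ≤ I.W := csSup_le hne fun x hx => (hsub hx).2
  have hIoo : Set.Ioo a b ⊆ G := by
    intro x hx
    obtain ⟨g1, hg1, hg1x⟩ := exists_lt_of_csInf_lt hne hx.1
    obtain ⟨g2, hg2, hxg2⟩ := exists_lt_of_lt_csSup hne hx.2
    exact hord.out hg1 hg2 ⟨hg1x.le, hxg2.le⟩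
  -- every earlier rectangle has bottom at most t
  have hbdd : BddAbove (Set.range fun j : {j : Fin n // (j : ℕ) < (i : ℕ)} =>
      (pos (j : Fin n)).2) := Set.Finite.bddAbove (Set.finite_range _)
  have hyj : ∀ j : Fin n, j < i → (pos j).2 ≤ t := by
    intro j hj
    refine le_trans ?_ hlow
    exact le_ciSup hbdd ⟨j, hj⟩
  have ht0 : 0 ≤ t := by
    refine le_trans ?_ hlow
    by_cases hE : Nonempty {j : Fin n // (j : ℕ) < (i : ℕ)}
    · obtain ⟨j⟩ := hE
      exact le_trans ((hBL j.1).1.1.2.2) (le_ciSup hbdd j)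
    · rw [not_nonempty_iff] at hE
      unfold maxYBelow
      rw [Real.iSup_of_isEmpty]
  -- the candidate position
  have hfeas : I.FeasibleAt pos i (a, t) := by
    constructor
    · exact ⟨ha0, by simp only; linarith, ht0⟩
    · intro j hj
      rw [Set.disjoint_left]
      rintro ⟨x, y⟩ hx1 hx2
      simp only [openBox, Set.mem_prod, Set.mem_Ioo] at hx1 hx2
      rcases le_or_gt ((pos j).2 + (I.r j).h) t with htop | htop
      · -- j lies entirely below the line
        have := hx1.2.1
        have := hx2.2.2
        linarith
      · -- j crosses the line, so its x-interval is occupied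
        have hybot : (pos j).2 < t := lt_of_le_of_ne (hyj j hj) (Ne.symm (hproper j).1)
        have hxG : x ∈ G := hIoo ⟨hx1.1.1, by linarith [hx1.1.2]⟩
        have hxocc : x ∈ I.occupied pos t := by
          refine Set.mem_biUnion (show j ∈ {j : Fin n | I.Intersects pos j t} from
            ⟨hybot, htop⟩) ?_
          exact ⟨hx2.1.1.le, hx2.1.2.le⟩
        exact Set.disjoint_left.mp hdisj hxG hxocc
  rcases (hBL i).2 (a, t) hfeas with h | h
  · simp only at h; linarith
  · simp only at h; linarith [h.1]
end

section
/- Let i ∈ {1, …, n} and suppose there exists a proper horizontal line ℓ in the region H_i of the horizontal strip partition of a BL packing that intersects exactly k rectangles among r_1, …, r_{i−1}, each of width at least w_{r_i}. Then every proper horizontal line in H_i has occupied fraction at least k/(2k+1). Moreover, if in addition some rectangle among r_1, …, r_{i−1} intersecting ℓ satisfies x = 0 or x + w = W, then every proper horizontal line in H_i has occupied fraction at least 1/2. -/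
open scoped Classical
open MeasureTheory

/-- **Lemma (occupied lines).** If some proper horizontal line in `H_i`
intersects exactly `k` rectangles among `r_1, …, r_{i-1}`, each of width at
least `w_{r_i}`, then every proper horizontal line in `H_i` is at least a
`k/(2k+1)` fraction occupied; if moreover one of the `k` rectangles touches the
left or the right strip boundary, then every proper horizontal line in `H_i`
is at least half occupied. -/
theorem line_occupation {n : ℕ} (I : SPInstance n) (pos : Fin n → ℝ × ℝ)
    (hBL : I.IsBL pos) (i : Fin n) (k : ℕ) (t₀ : ℝ)
    (hproper₀ : I.ProperLine pos t₀)
    (hlow₀ : maxYBelow pos (i : ℕ) ≤ t₀) (hhigh₀ : t₀ < (pos i).2)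
    (hcard : (Finset.univ.filter
        (fun j : Fin n => j < i ∧ I.Intersects pos j t₀)).card = k)
    (hwide : ∀ j : Fin n, j < i → I.Intersects pos j t₀ →
      (I.r i).w ≤ (I.r j).w) :
    (∀ t : ℝ, I.ProperLine pos t → maxYBelow pos (i : ℕ) ≤ t → t < (pos i).2 →
      (k : ℝ) / (2 * (k : ℝ) + 1) ≤ I.occFrac pos t) ∧
    ((∃ j : Fin n, j < i ∧ I.Intersects pos j t₀ ∧
        ((pos j).1 = 0 ∨ (pos j).1 + (I.r j).w = I.W)) →
      ∀ t : ℝ, I.ProperLine pos t → maxYBelow pos (i : ℕ) ≤ t → t < (pos i).2 →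
        1 / 2 ≤ I.occFrac pos t) := by
  classical
  set w := (I.r i).w with hwdef
  have hw_pos : 0 < w := I.w_pos i
  have hW_pos : 0 < I.W := I.W_pos
  have hmax0 : 0 ≤ maxYBelow pos (i : ℕ) :=
    Real.iSup_nonneg fun j => ((hBL j.1).1.1).2.2
  have hyle : ∀ j : Fin n, j < i → (pos j).2 ≤ maxYBelow pos (i : ℕ) := by
    intro j hj
    exact le_ciSup (f := fun j' : {j' : Fin n // (j' : ℕ) < (i : ℕ)} =>
        (pos (j' : Fin n)).2)
      (Set.Finite.bddAbove (Set.finite_range _)) ⟨j, hj⟩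
  -- Lemma A: every window of width w on a proper line in H_i is blocked
  have lemA : ∀ t : ℝ, I.ProperLine pos t → maxYBelow pos (i : ℕ) ≤ t →
      t < (pos i).2 → ∀ x : ℝ, 0 ≤ x → x + w ≤ I.W →
      ∃ j : Fin n, j < i ∧ I.Intersects pos j t ∧
        (pos j).1 < x + w ∧ x < (pos j).1 + (I.r j).w := by
    intro t hpt hlt hht x hx hxW
    by_contra hcon
    push_neg at hcon
    have hfeas : I.FeasibleAt pos i (x, t) := by
      refine ⟨⟨hx, hxW, le_trans hmax0 hlt⟩, ?_⟩
      intro j hj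
      rw [Set.disjoint_left]
      rintro ⟨a, b⟩ hab hab'
      simp only [openBox, Set.mem_prod, Set.mem_Ioo] at hab hab'
      have hyj : (pos j).2 < t :=
        lt_of_le_of_ne (le_trans (hyle j hj) hlt) (Ne.symm (hpt j).1)
      have hint : I.Intersects pos j t := ⟨hyj, by linarith [hab.2.1, hab'.2.2]⟩
      have hle := hcon j hj hint (by linarith [hab.1.2, hab'.1.1])
      linarith [hab.1.1, hab'.1.2]
    rcases (hBL i).2 (x, t) hfeas with h | h
    · have h1 : (pos i).2 < t := h
      linarith
    · have h1 : (pos i).2 = t := h.1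
      linarith
  set S : Finset (Fin n) :=
    Finset.univ.filter (fun j : Fin n => j < i ∧ I.Intersects pos j t₀) with hSdef
  have hmemS : ∀ j : Fin n, j ∈ S ↔ j < i ∧ I.Intersects pos j t₀ := by
    intro j; simp [hSdef]
  -- pairwise x-disjointness of rectangles crossing the line t₀
  have hIoo : ∀ j j' : Fin n, j < i → j' < i → j ≠ j' →
      I.Intersects pos j t₀ → I.Intersects pos j' t₀ →
      Disjoint (Set.Ioo (pos j).1 ((pos j).1 + (I.r j).w))
        (Set.Ioo (pos j').1 ((pos j').1 + (I.r j').w)) := by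
    intro j j' hji hj'i hne hint hint'
    have hd : Disjoint (openBox (I.r j) (pos j)) (openBox (I.r j') (pos j')) := by
      rcases hne.lt_or_gt with h | h
      · exact ((hBL j').1.2 j h).symm
      · exact (hBL j).1.2 j' h
    rw [Set.disjoint_left]
    intro a haj haj'
    have h1 : ((a, t₀) : ℝ × ℝ) ∈ openBox (I.r j) (pos j) := by
      simp only [openBox, Set.mem_prod, Set.mem_Ioo]
      exact ⟨⟨haj.1, haj.2⟩, hint.1, hint.2⟩
    have h2 : ((a, t₀) : ℝ × ℝ) ∈ openBox (I.r j') (pos j') := by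
      simp only [openBox, Set.mem_prod, Set.mem_Ioo]
      exact ⟨⟨haj'.1, haj'.2⟩, hint'.1, hint'.2⟩
    exact Set.disjoint_left.mp hd h1 h2
  -- every rectangle crossing t₀ crosses every proper line in H_i
  have hSinter : ∀ t : ℝ, I.ProperLine pos t → maxYBelow pos (i : ℕ) ≤ t →
      t < (pos i).2 → ∀ j ∈ S, I.Intersects pos j t := by
    intro t hpt hlt hht j hjS
    obtain ⟨hji, hint0⟩ := (hmemS j).mp hjS
    have hyjt : (pos j).2 < t :=
      lt_of_le_of_ne (le_trans (hyle j hji) hlt) (Ne.symm (hpt j).1)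
    refine ⟨hyjt, ?_⟩
    by_contra htop
    push_neg at htop
    have ht0t : t₀ < t := by
      by_contra h
      push_neg at h
      linarith [hint0.2]
    have hwj : w ≤ (I.r j).w := hwide j hji hint0
    obtain ⟨j', hj'i, hint', hx1, hx2⟩ :=
      lemA t hpt hlt hht (pos j).1 ((hBL j).1.1.1)
        (le_trans (by linarith) ((hBL j).1.1.2.1))
    have hne : j' ≠ j := by
      intro h; subst h
      exact absurd hint'.2 (by linarith)
    have hint'0 : I.Intersects pos j' t₀ :=
      ⟨lt_of_le_of_ne (le_trans (hyle j' hj'i) hlow₀) (Ne.symm (hproper₀ j').1),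
        by linarith [hint'.2]⟩
    have hd := hIoo j j' hji hj'i (Ne.symm hne) hint0 hint'0
    have hM : max (pos j).1 (pos j').1 <
        min ((pos j).1 + (I.r j).w) ((pos j').1 + (I.r j').w) := by
      simp only [max_lt_iff, lt_min_iff]
      refine ⟨⟨?_, ?_⟩, ?_, ?_⟩ <;> linarith [I.w_pos j, I.w_pos j']
    set a := (max (pos j).1 (pos j').1 +
      min ((pos j).1 + (I.r j).w) ((pos j').1 + (I.r j').w)) / 2 with hadef
    have haj : a ∈ Set.Ioo (pos j).1 ((pos j).1 + (I.r j).w) := by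
      constructor
      · have := le_max_left (pos j).1 (pos j').1
        have := min_le_left ((pos j).1 + (I.r j).w) ((pos j').1 + (I.r j').w)
        rw [hadef]; linarith
      · have := le_max_left (pos j).1 (pos j').1
        have := min_le_left ((pos j).1 + (I.r j).w) ((pos j').1 + (I.r j').w)
        rw [hadef]; linarith
    have haj' : a ∈ Set.Ioo (pos j').1 ((pos j').1 + (I.r j').w) := by
      constructor
      · have := le_max_right (pos j).1 (pos j').1
        have := min_le_right ((pos j).1 + (I.r j).w) ((pos j').1 + (I.r j').w)
        rw [hadef]; linarith
      · have := le_max_right (pos j).1 (pos j').1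
        have := min_le_right ((pos j).1 + (I.r j).w) ((pos j').1 + (I.r j').w)
        rw [hadef]; linarith
    exact Set.disjoint_left.mp hd haj haj'
  set O : ℝ := ∑ j ∈ S, (I.r j).w with hOdef
  have hO_nonneg : 0 ≤ O := Finset.sum_nonneg fun j _ => (I.w_pos j).le
  have hOk : (k : ℝ) * w ≤ O := by
    have h := Finset.card_nsmul_le_sum S (fun j => (I.r j).w) w
      (fun j hj => hwide j ((hmemS j).mp hj).1 ((hmemS j).mp hj).2)
    rwa [hcard, nsmul_eq_mul] at h
  -- upper bound on W from the line t₀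
  have hcover : Set.Icc (0 : ℝ) (I.W - w) ⊆
      ⋃ j ∈ S, Set.Ioo ((pos j).1 - w) ((pos j).1 + (I.r j).w) := by
    intro x hx
    obtain ⟨j, hji, hint, h1, h2⟩ :=
      lemA t₀ hproper₀ hlow₀ hhigh₀ x hx.1 (by linarith [hx.2])
    exact Set.mem_iUnion₂.mpr ⟨j, (hmemS j).mpr ⟨hji, hint⟩, by constructor <;> linarith⟩
  have hsum_nonneg : ∀ j : Fin n, (0:ℝ) ≤ (I.r j).w + w :=
    fun j => by linarith [I.w_pos j]
  have hWO : I.W ≤ O + ((k : ℝ) + 1) * w := by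
    have h1 : volume (Set.Icc (0 : ℝ) (I.W - w)) ≤
        ∑ j ∈ S, volume (Set.Ioo ((pos j).1 - w) ((pos j).1 + (I.r j).w)) :=
      le_trans (measure_mono hcover) (measure_biUnion_finset_le S _)
    have h2 : ∑ j ∈ S, volume (Set.Ioo ((pos j).1 - w) ((pos j).1 + (I.r j).w))
        = ENNReal.ofReal (∑ j ∈ S, ((I.r j).w + w)) := by
      rw [ENNReal.ofReal_sum_of_nonneg (fun j _ => hsum_nonneg j)]
      refine Finset.sum_congr rfl fun j _ => ?_
      rw [Real.volume_Ioo]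
      congr 1
      ring
    rw [Real.volume_Icc, sub_zero, h2] at h1
    have h3 : I.W - w ≤ ∑ j ∈ S, ((I.r j).w + w) :=
      (ENNReal.ofReal_le_ofReal_iff
        (Finset.sum_nonneg fun j _ => hsum_nonneg j)).mp h1
    rw [Finset.sum_add_distrib, Finset.sum_const, hcard, nsmul_eq_mul] at h3
    rw [hOdef]
    linarith
  -- the occupied set always has finite volume
  have hvol_ne : ∀ t : ℝ, volume (I.occupied pos t) ≠ ⊤ := by
    intro t
    have hsub : I.occupied pos t ⊆
        ⋃ j ∈ (Finset.univ : Finset (Fin n)),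
          Set.Icc (pos j).1 ((pos j).1 + (I.r j).w) := by
      intro a ha
      simp only [SPInstance.occupied, Set.mem_iUnion, Set.mem_setOf_eq] at ha
      obtain ⟨j, _, haj⟩ := ha
      exact Set.mem_iUnion₂.mpr ⟨j, Finset.mem_univ j, haj⟩
    have h1 := le_trans (measure_mono hsub)
      (measure_biUnion_finset_le (μ := volume) Finset.univ
        (fun j => Set.Icc (pos j).1 ((pos j).1 + (I.r j).w)))
    refine ne_top_of_le_ne_top ?_ h1
    refine ne_of_lt (ENNReal.sum_lt_top.mpr ?_)
    intro j _
    rw [Real.volume_Icc]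
    exact ENNReal.ofReal_lt_top
  -- lower bound on the occupied volume of every proper line in H_i
  have hocc_lb : ∀ t : ℝ, I.ProperLine pos t → maxYBelow pos (i : ℕ) ≤ t →
      t < (pos i).2 → O ≤ (volume (I.occupied pos t)).toReal := by
    intro t hpt hlt hht
    have hsub : (⋃ j ∈ S, Set.Ioo (pos j).1 ((pos j).1 + (I.r j).w)) ⊆
        I.occupied pos t := by
      intro a ha
      obtain ⟨j, hjS, haj⟩ := Set.mem_iUnion₂.mp ha
      simp only [SPInstance.occupied, Set.mem_iUnion, Set.mem_setOf_eq]
      exact ⟨j, hSinter t hpt hlt hht j hjS, Set.Ioo_subset_Icc_self haj⟩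
    have hdisj : (↑S : Set (Fin n)).PairwiseDisjoint
        (fun j => Set.Ioo (pos j).1 ((pos j).1 + (I.r j).w)) := by
      intro j hj j' hj' hne
      obtain ⟨hji, hint⟩ := (hmemS j).mp (Finset.mem_coe.mp hj)
      obtain ⟨hj'i, hint'⟩ := (hmemS j').mp (Finset.mem_coe.mp hj')
      exact hIoo j j' hji hj'i hne hint hint'
    have h1 : ENNReal.ofReal O ≤ volume (I.occupied pos t) := by
      calc ENNReal.ofReal O = ∑ j ∈ S, ENNReal.ofReal ((I.r j).w) :=
            ENNReal.ofReal_sum_of_nonneg (fun j _ => (I.w_pos j).le)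
        _ = ∑ j ∈ S, volume (Set.Ioo (pos j).1 ((pos j).1 + (I.r j).w)) := by
            refine Finset.sum_congr rfl fun j _ => ?_
            rw [Real.volume_Ioo]
            congr 1
            ring
        _ = volume (⋃ j ∈ S, Set.Ioo (pos j).1 ((pos j).1 + (I.r j).w)) :=
            (measure_biUnion_finset hdisj (fun j _ => measurableSet_Ioo)).symm
        _ ≤ _ := measure_mono hsub
    exact (ENNReal.ofReal_le_iff_le_toReal (hvol_ne t)).mp h1
  constructor
  · intro t hpt hlt hht
    have hOlb := hocc_lb t hpt hlt hht
    have hk0 : (0 : ℝ) ≤ (k : ℝ) := Nat.cast_nonneg k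
    have h2k : (0 : ℝ) < 2 * (k : ℝ) + 1 := by positivity
    simp only [SPInstance.occFrac]
    rw [div_le_div_iff₀ h2k hW_pos]
    nlinarith [mul_le_mul_of_nonneg_left hWO hk0,
      mul_le_mul_of_nonneg_left hOk (by positivity : (0:ℝ) ≤ (k:ℝ) + 1),
      mul_le_mul_of_nonneg_left hOlb (le_of_lt h2k)]
  · rintro ⟨j₀, hj₀i, hint₀, hbd⟩ t hpt hlt hht
    have hj₀S : j₀ ∈ S := (hmemS j₀).mpr ⟨hj₀i, hint₀⟩
    have hk1 : 1 ≤ k := by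
      rw [← hcard]
      exact Finset.card_pos.mpr ⟨j₀, hj₀S⟩
    have hcover2 : Set.Icc (0 : ℝ) (I.W - w) ⊆
        (Set.Ioo ((pos j₀).1 - w) ((pos j₀).1 + (I.r j₀).w) ∩
          Set.Icc 0 (I.W - w)) ∪
        ⋃ j ∈ S.erase j₀, Set.Ioo ((pos j).1 - w) ((pos j).1 + (I.r j).w) := by
      intro x hx
      obtain ⟨j, hji, hint, h1, h2⟩ :=
        lemA t₀ hproper₀ hlow₀ hhigh₀ x hx.1 (by linarith [hx.2])
      by_cases hjj : j = j₀
      · subst hjj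
        exact Or.inl ⟨⟨by linarith, h2⟩, hx⟩
      · exact Or.inr (Set.mem_iUnion₂.mpr ⟨j,
          Finset.mem_erase.mpr ⟨hjj, (hmemS j).mpr ⟨hji, hint⟩⟩,
          by constructor <;> linarith⟩)
    have hfirst : volume (Set.Ioo ((pos j₀).1 - w) ((pos j₀).1 + (I.r j₀).w) ∩
        Set.Icc 0 (I.W - w)) ≤ ENNReal.ofReal ((I.r j₀).w) := by
      rcases hbd with h0 | hWr
      · have hss : Set.Ioo ((pos j₀).1 - w) ((pos j₀).1 + (I.r j₀).w) ∩
            Set.Icc 0 (I.W - w) ⊆ Set.Ico (0:ℝ) ((I.r j₀).w) := by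
          rintro a ⟨⟨_, ha2⟩, ha3, _⟩
          rw [h0] at ha2
          exact Set.mem_Ico.mpr ⟨ha3, by linarith⟩
        refine le_trans (measure_mono hss) ?_
        rw [Real.volume_Ico, sub_zero]
      · have hss : Set.Ioo ((pos j₀).1 - w) ((pos j₀).1 + (I.r j₀).w) ∩
            Set.Icc 0 (I.W - w) ⊆ Set.Ioc ((pos j₀).1 - w) (I.W - w) := by
          rintro a ⟨⟨ha1, _⟩, _, ha4⟩
          exact Set.mem_Ioc.mpr ⟨ha1, ha4⟩
        refine le_trans (measure_mono hss) ?_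
        rw [Real.volume_Ioc]
        exact ENNReal.ofReal_le_ofReal (by linarith)
    have hsum_erase : ∑ j ∈ S.erase j₀, (I.r j).w = O - (I.r j₀).w := by
      have h := Finset.sum_erase_add S (fun j => (I.r j).w) hj₀S
      rw [hOdef]
      linarith [h]
    have hcard_erase : ((S.erase j₀).card : ℝ) = (k : ℝ) - 1 := by
      rw [Finset.card_erase_of_mem hj₀S, hcard]
      rw [Nat.cast_sub hk1, Nat.cast_one]
    have hW2 : I.W ≤ O + (k : ℝ) * w := by
      have h1 : volume (Set.Icc (0 : ℝ) (I.W - w)) ≤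
          ENNReal.ofReal ((I.r j₀).w) +
            ∑ j ∈ S.erase j₀, ENNReal.ofReal ((I.r j).w + w) := by
        refine le_trans (measure_mono hcover2)
          (le_trans (measure_union_le _ _) (add_le_add hfirst ?_))
        refine le_trans (measure_biUnion_finset_le _ _)
          (Finset.sum_le_sum fun j _ => ?_)
        rw [Real.volume_Ioo]
        exact le_of_eq (by congr 1; ring)
      rw [← ENNReal.ofReal_sum_of_nonneg (fun j _ => hsum_nonneg j),
        ← ENNReal.ofReal_add (I.w_pos j₀).le
          (Finset.sum_nonneg fun j _ => hsum_nonneg j),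
        Real.volume_Icc, sub_zero] at h1
      have h3 : I.W - w ≤ (I.r j₀).w + ∑ j ∈ S.erase j₀, ((I.r j).w + w) :=
        (ENNReal.ofReal_le_ofReal_iff
          (add_nonneg (I.w_pos j₀).le
            (Finset.sum_nonneg fun j _ => hsum_nonneg j))).mp h1
      rw [Finset.sum_add_distrib, Finset.sum_const, nsmul_eq_mul,
        hsum_erase] at h3
      rw [hcard_erase] at h3
      linarith
    have hOlb := hocc_lb t hpt hlt hht
    simp only [SPInstance.occFrac]
    rw [div_le_div_iff₀ (by norm_num : (0:ℝ) < 2) hW_pos]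
    linarith
end

section
/- Let F, Q, 𝒲 be the sets of the FQW-partition of a Strip Packing instance (W, r_1, …, r_n). Then for every rectangle r ∈ Q ∪ 𝒲 it holds that h_r ≤ (1/2) · h_OPT. -/
open scoped Classical
open MeasureTheory

section MyAux
variable {n : ℕ} {α : Type*}

lemma my_foldl_step_subset (step : Finset (Fin n) → α → Finset (Fin n))
    (hstep : ∀ F a, F ⊆ step F a) (l : List α) (F0 : Finset (Fin n)) :
    F0 ⊆ l.foldl step F0 := by
  induction l generalizing F0 with
  | nil => simp
  | cons a l ih => exact (hstep F0 a).trans (ih _)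

lemma my_foldl_step_mem (σ : α → Fin n)
    (step : Finset (Fin n) → α → Finset (Fin n))
    (hstep : ∀ F a, step F a = F ∨ step F a = insert (σ a) F)
    (l : List α) (F0 : Finset (Fin n)) (x : Fin n)
    (hx : x ∈ l.foldl step F0) : x ∈ F0 ∨ ∃ a ∈ l, x = σ a := by
  induction l generalizing F0 with
  | nil => simpa using hx
  | cons a l ih =>
    rcases ih _ hx with h | ⟨b, hb, rfl⟩
    · rcases hstep F0 a with he | he
      · rw [he] at h; exact Or.inl h
      · rw [he, Finset.mem_insert] at h
        rcases h with h | h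
        · exact Or.inr ⟨a, by simp, h⟩
        · exact Or.inl h
    · exact Or.inr ⟨b, by simp [hb], rfl⟩

lemma my_mem_take_finRange {n m : ℕ} {j : Fin n}
    (h : j ∈ (List.finRange n).take m) : (j : ℕ) < m := by
  obtain ⟨a, ha, rfl⟩ := List.mem_take_iff_getElem.1 h
  simp at ha ⊢
  omega

lemma my_exists_feasible (I : SPInstance n) : ∃ pos, I.Feasible pos := by
  refine ⟨fun j => (0, ∑ k ∈ Finset.univ.filter (fun k => k < j), (I.r k).h), ?_, ?_⟩
  · intro j
    refine ⟨le_refl 0, by simpa using I.w_le_W j, ?_⟩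
    show (0:ℝ) ≤ ∑ k ∈ Finset.univ.filter (fun k => k < j), (I.r k).h
    exact Finset.sum_nonneg fun (k : Fin n) _ => (I.h_pos k).le
  · have key : ∀ i j : Fin n, i < j →
        (∑ k ∈ Finset.univ.filter (fun k => k < i), (I.r k).h) + (I.r i).h ≤
        ∑ k ∈ Finset.univ.filter (fun k => k < j), (I.r k).h := by
      intro i j hij
      have hsub : insert i (Finset.univ.filter (fun k => k < i)) ⊆
          Finset.univ.filter (fun k => k < j) := by
        intro x hx
        rcases Finset.mem_insert.1 hx with rfl | hx
        · simpa using hij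
        · simp only [Finset.mem_filter, Finset.mem_univ, true_and] at hx ⊢
          exact hx.trans hij
      have hni : i ∉ Finset.univ.filter (fun k => k < i) := by simp
      calc (∑ k ∈ Finset.univ.filter (fun k => k < i), (I.r k).h) + (I.r i).h
          = ∑ k ∈ insert i (Finset.univ.filter (fun k => k < i)), (I.r k).h := by
            rw [Finset.sum_insert hni]; ring
        _ ≤ ∑ k ∈ Finset.univ.filter (fun k => k < j), (I.r k).h :=
            Finset.sum_le_sum_of_subset_of_nonneg hsub
              (fun k _ _ => (I.h_pos k).le)
    have dis : ∀ i j : Fin n, i < j →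
        Disjoint (openBox (I.r i) (0, ∑ k ∈ Finset.univ.filter (fun k => k < i), (I.r k).h))
          (openBox (I.r j) (0, ∑ k ∈ Finset.univ.filter (fun k => k < j), (I.r k).h)) := by
      intro i j hij
      rw [Set.disjoint_left]
      rintro ⟨x, y⟩ hp hq
      simp only [openBox, Set.mem_prod, Set.mem_Ioo] at hp hq
      have := key i j hij
      linarith [hp.2.2, hq.2.1]
    intro i j hij
    rcases lt_or_gt_of_ne hij with h | h
    · exact dis i j h
    · exact (dis j i h).symm

lemma my_half_bound (I : SPInstance n) (pos : Fin n → ℝ × ℝ) (hf : I.Feasible pos)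
    (S : Finset (Fin n)) (h : ℝ) (hh : 0 < h)
    (hS : ∀ f ∈ S, h ≤ (I.r f).h) (hw : I.W < ∑ f ∈ S, (I.r f).w) :
    h ≤ 1 / 2 * I.height pos := by
  by_contra hcon
  push_neg at hcon
  set H := I.height pos with hHdef
  set t : ℝ := 1 / 2 * H with htdef
  have hle : ∀ f : Fin n, (pos f).2 + (I.r f).h ≤ H := by
    intro f
    exact le_ciSup (f := fun i => (pos i).2 + (I.r i).h)
      (Set.Finite.bddAbove (Set.finite_range _)) f
  -- t is strictly inside the y-range of every f ∈ S
  have hin : ∀ f ∈ S, (pos f).2 < t ∧ t < (pos f).2 + (I.r f).h := by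
    intro f hfS
    have h1 := hS f hfS
    have h2 := hle f
    have h3 := (hf.1 f).2.2
    constructor <;> [linarith; linarith]
  -- pairwise disjoint x-intervals
  have hdisj : (↑S : Set (Fin n)).PairwiseDisjoint
      (fun f => Set.Ioo (pos f).1 ((pos f).1 + (I.r f).w)) := by
    intro f hfS g hgS hne
    simp only [Function.onFun]
    rw [Set.disjoint_left]
    intro x hxf hxg
    have hfS' : f ∈ S := hfS
    have hgS' : g ∈ S := hgS
    have hd : Disjoint (openBox (I.r f) (pos f)) (openBox (I.r g) (pos g)) := hf.2 hne
    have hmf : (x, t) ∈ openBox (I.r f) (pos f) := by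
      simp only [openBox, Set.mem_prod, Set.mem_Ioo]
      exact ⟨⟨hxf.1, hxf.2⟩, (hin f hfS').1, (hin f hfS').2⟩
    have hmg : (x, t) ∈ openBox (I.r g) (pos g) := by
      simp only [openBox, Set.mem_prod, Set.mem_Ioo]
      exact ⟨⟨hxg.1, hxg.2⟩, (hin g hgS').1, (hin g hgS').2⟩
    exact Set.disjoint_left.1 hd hmf hmg
  have hmeas := measure_biUnion_finset (μ := volume) hdisj
      (fun f _ => (measurableSet_Ioo : MeasurableSet (Set.Ioo (pos f).1 ((pos f).1 + (I.r f).w))))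
  have hsub : (⋃ f ∈ S, Set.Ioo (pos f).1 ((pos f).1 + (I.r f).w)) ⊆ Set.Icc 0 I.W := by
    intro x hx
    simp only [Set.mem_iUnion] at hx
    obtain ⟨f, _, hx⟩ := hx
    have h1 := (hf.1 f).1
    have h2 := (hf.1 f).2.1
    exact ⟨by linarith [hx.1], by linarith [hx.2]⟩
  have hmono := measure_mono (μ := volume) hsub
  rw [hmeas] at hmono
  have hvol : ∀ f : Fin n, volume (Set.Ioo (pos f).1 ((pos f).1 + (I.r f).w))
      = ENNReal.ofReal ((I.r f).w) := by
    intro f; rw [Real.volume_Ioo]; ring_nf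
  simp only [hvol, Real.volume_Icc, sub_zero] at hmono
  rw [← ENNReal.ofReal_sum_of_nonneg (fun f _ => (I.w_pos f).le)] at hmono
  have := (ENNReal.ofReal_le_ofReal_iff I.W_pos.le).1 hmono
  linarith

end MyAux

/-- **Lemma.** Every rectangle of `Q ∪ 𝒲` of the FQW-partition has height at
most half of the optimum packing height. -/
theorem height_le_half_hOPT {n : ℕ} (I : SPInstance n) (d : FQW I)
    (i : Fin n) (hi : i ∈ d.Q ∪ d.Wset) :
    (I.r i).h ≤ 1 / 2 * I.hOPT := by
  classical
  have hiF : i ∉ d.F := by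
    rcases Finset.mem_union.1 hi with h | h
    · exact (Finset.mem_filter.1 h).2.1
    · exact (Finset.mem_filter.1 h).2.1
  set σ := d.σ with hσdef
  set step : Finset (Fin n) → Fin n → Finset (Fin n) :=
    fun F k => if (I.r (σ k)).w + ∑ f ∈ F, (I.r f).w ≤ I.W then insert (σ k) F else F
    with hstepdef
  have hstep_sub : ∀ F a, F ⊆ step F a := by
    intro F a; dsimp only [step]; split
    · exact Finset.subset_insert _ _
    · exact Finset.Subset.refl _
  have hstep_or : ∀ F a, step F a = F ∨ step F a = insert (σ a) F := by
    intro F a; dsimp only [step]; split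
    · exact Or.inr rfl
    · exact Or.inl rfl
  set k : Fin n := σ.symm i with hk
  have hσk : σ k = i := σ.apply_symm_apply i
  set F1 : Finset (Fin n) := ((List.finRange n).take (k : ℕ)).foldl step ∅ with hF1
  have hmem : ∀ f ∈ F1, ∃ a : Fin n, (a : ℕ) < (k : ℕ) ∧ f = σ a := by
    intro f hf
    rcases my_foldl_step_mem σ step hstep_or _ ∅ f hf with h | ⟨a, ha, rfl⟩
    · simp at h
    · exact ⟨a, my_mem_take_finRange ha, rfl⟩
  have hFdef : d.F = (List.finRange n).foldl step ∅ := rfl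
  have h2 : (List.finRange n).foldl step ∅ =
      ((List.finRange n).drop ((k : ℕ) + 1)).foldl step
        (((List.finRange n).take ((k : ℕ) + 1)).foldl step ∅) := by
    conv_lhs => rw [← List.take_append_drop ((k : ℕ) + 1) (List.finRange n)]
    rw [List.foldl_append]
  have h3 : ((List.finRange n).take ((k : ℕ) + 1)).foldl step ∅ = step F1 k := by
    have ht : (List.finRange n).take ((k : ℕ) + 1) =
        (List.finRange n).take (k : ℕ) ++ [k] := by
      rw [List.take_succ]
      have hsome : (List.finRange n)[(k : ℕ)]? = some k := by
        rw [List.getElem?_eq_getElem (by simpa using k.isLt)]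
        simp
      simp [hsome]
    rw [ht, List.foldl_append]
    rfl
  have hik1 : i ∉ step F1 k := by
    intro hmem'
    apply hiF
    rw [hFdef, h2, h3]
    exact my_foldl_step_subset step hstep_sub _ _ hmem'
  have hcond : ¬ ((I.r i).w + ∑ f ∈ F1, (I.r f).w ≤ I.W) := by
    intro hc
    apply hik1
    have : step F1 k = insert i F1 := by
      dsimp only [step]
      rw [hσk, if_pos hc]
    rw [this]
    exact Finset.mem_insert_self i F1
  push_neg at hcond
  have hiF1 : i ∉ F1 := by
    intro hiF1
    obtain ⟨a, ha, hEq⟩ := hmem i hiF1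
    have : a = k := by
      apply σ.injective
      rw [hσk, ← hEq]
    omega
  have hwsum : I.W < ∑ f ∈ insert i F1, (I.r f).w := by
    rw [Finset.sum_insert hiF1]
    linarith
  have hhts : ∀ f ∈ insert i F1, (I.r i).h ≤ (I.r f).h := by
    intro f hf
    rcases Finset.mem_insert.1 hf with rfl | hf
    · exact le_refl _
    · obtain ⟨a, ha, rfl⟩ := hmem f hf
      have := d.sorted a k (by omega)
      rwa [← hσdef, hσk] at this
  obtain ⟨pos0, hpos0⟩ := my_exists_feasible I
  have hne : {H | ∃ pos, I.Feasible pos ∧ I.height pos = H}.Nonempty :=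
    ⟨_, pos0, hpos0, rfl⟩
  have hlb : ∀ H ∈ {H | ∃ pos, I.Feasible pos ∧ I.height pos = H},
      2 * (I.r i).h ≤ H := by
    rintro H ⟨pos, hfe, rfl⟩
    have := my_half_bound I pos hfe (insert i F1) ((I.r i).h) (I.h_pos i) hhts hwsum
    linarith
  have := le_csInf hne hlb
  rw [SPInstance.hOPT]
  linarith
end

section
/- Let (W, r_1, …, r_n) be a Strip Packing instance whose rectangles are listed in the FQW-ordering and consider its BL packing. If Q = ∅, or if max{y_r + h_r : r ∈ Q} ≤ h_max, then h_BL ≤ 2 · h_OPT. -/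
open scoped Classical
open MeasureTheory

/-!
The rectangles of `F` have total width at most `W`, so BL puts them side by side on the floor
of the strip; together with the hypothesis on `Q`, every rectangle outside `𝒲` ends below
`h_max`. BL never places a rectangle higher than the top of everything placed before it, so the
rectangles of `𝒲` at worst stack up, and the packing has height at most `h_max + ∑_{𝒲} h`.
Both terms are at most `h_OPT`: the rectangles of `𝒲` are wider than `W / 2`, so in every
packing they all cross the line `x = W / 2` and their `y`-ranges are disjoint.
-/

lemma openBox_disjoint_iff {R S : Rect} {p q : ℝ × ℝ} :
    Disjoint (openBox R p) (openBox S q) ↔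
      min (p.1 + R.w) (q.1 + S.w) ≤ max p.1 q.1 ∨ min (p.2 + R.h) (q.2 + S.h) ≤ max p.2 q.2 := by
  simp only [openBox, Set.disjoint_prod, Set.Ioo_disjoint_Ioo]

lemma sum_le_of_pairwiseDisjoint_Ioo {ι : Type*} {s : Finset ι} {a l : ι → ℝ} {c d : ℝ}
    (hl : ∀ i ∈ s, 0 ≤ l i) (hcd : c ≤ d) (hsub : ∀ i ∈ s, c ≤ a i ∧ a i + l i ≤ d)
    (hdisj : (s : Set ι).PairwiseDisjoint fun i => Set.Ioo (a i) (a i + l i)) :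
    ∑ i ∈ s, l i ≤ d - c := by
  have hvol : volume (⋃ i ∈ s, Set.Ioo (a i) (a i + l i)) ≤ volume (Set.Icc c d) :=
    measure_mono <| Set.iUnion₂_subset fun i hi =>
      Set.Ioo_subset_Icc_self.trans (Set.Icc_subset_Icc (hsub i hi).1 (hsub i hi).2)
  rw [measure_biUnion_finset hdisj fun i _ => measurableSet_Ioo, Real.volume_Icc] at hvol
  simp only [Real.volume_Ioo, add_sub_cancel_left] at hvol
  rwa [← ENNReal.ofReal_sum_of_nonneg hl, ENNReal.ofReal_le_ofReal_iff (sub_nonneg.2 hcd)] at hvol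

namespace SPInstance

variable {n : ℕ} (I : SPInstance n) {pos : Fin n → ℝ × ℝ}

lemma top_le_height (pos : Fin n → ℝ × ℝ) (i : Fin n) :
    (pos i).2 + (I.r i).h ≤ I.height pos :=
  le_ciSup (f := fun j => (pos j).2 + (I.r j).h) (Set.finite_range _).bddAbove i

lemma h_le_hmax (i : Fin n) : (I.r i).h ≤ I.hmax :=
  le_ciSup (f := fun j => (I.r j).h) (Set.finite_range _).bddAbove i

lemma hmax_nonneg : 0 ≤ I.hmax :=
  Real.iSup_nonneg fun i => (I.h_pos i).le

noncomputable def prefixWidth (k : ℕ) : ℝ :=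
  ∑ j ∈ Finset.univ.filter (fun j : Fin n => (j : ℕ) < k), (I.r j).w

@[simp]
lemma prefixWidth_zero : I.prefixWidth 0 = 0 := by
  simp [prefixWidth]

lemma prefixWidth_nonneg (k : ℕ) : 0 ≤ I.prefixWidth k :=
  Finset.sum_nonneg fun j _ => (I.w_pos j).le

lemma prefixWidth_mono : Monotone I.prefixWidth := fun k m hkm =>
  Finset.sum_le_sum_of_subset_of_nonneg
    (fun j hj => by simp only [Finset.mem_filter, Finset.mem_univ, true_and] at hj ⊢; omega)
    fun j _ _ => (I.w_pos j).le

lemma prefixWidth_succ (j : Fin n) :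
    I.prefixWidth (j + 1) = I.prefixWidth j + (I.r j).w := by
  have hins : Finset.univ.filter (fun k : Fin n => (k : ℕ) < j + 1)
      = insert j (Finset.univ.filter fun k : Fin n => (k : ℕ) < j) := by
    ext k
    simp only [Finset.mem_filter, Finset.mem_univ, true_and, Finset.mem_insert, Fin.ext_iff]
    omega
  rw [prefixWidth, hins, Finset.sum_insert (by simp), add_comm]
  rfl

lemma exists_prefixWidth_le_lt {x : ℝ} (hx : 0 ≤ x) {m : ℕ} (hm : x < I.prefixWidth m) :
    ∃ k < m, I.prefixWidth k ≤ x ∧ x < I.prefixWidth (k + 1) := by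
  induction m with
  | zero => rw [prefixWidth_zero] at hm; linarith
  | succ m ih =>
    by_cases h : x < I.prefixWidth m
    · obtain ⟨k, hk, hkx⟩ := ih h
      exact ⟨k, hk.trans m.lt_succ_self, hkx⟩
    · exact ⟨m, m.lt_succ_self, not_lt.1 h, hm⟩

lemma sum_greedyF_le (σ : Equiv.Perm (Fin n)) : ∑ f ∈ I.greedyF σ, (I.r f).w ≤ I.W := by
  suffices h : ∀ (l : List (Fin n)) (F : Finset (Fin n)), ∑ f ∈ F, (I.r f).w ≤ I.W →
      ∑ f ∈ l.foldl (fun F k => if (I.r (σ k)).w + ∑ f ∈ F, (I.r f).w ≤ I.W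
        then insert (σ k) F else F) F, (I.r f).w ≤ I.W from
    h _ _ (by simpa using I.W_pos.le)
  intro l
  induction l with
  | nil => exact fun F hF => hF
  | cons k l ih =>
    intro F hF
    refine ih _ ?_
    dsimp only
    split_ifs with hk
    · by_cases hmem : σ k ∈ F
      · rwa [Finset.insert_eq_of_mem hmem]
      · rwa [Finset.sum_insert hmem]
    · exact hF

variable {I}

lemma IsBL.feasible (hBL : I.IsBL pos) : I.Feasible pos := by
  refine ⟨fun i => (hBL i).1.1, fun i j hij => ?_⟩
  rcases hij.lt_or_gt with h | h
  · exact ((hBL j).1.2 i h).symm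
  · exact (hBL i).1.2 j h

lemma Feasible.height_nonneg (hf : I.Feasible pos) : 0 ≤ I.height pos :=
  Real.iSup_nonneg fun i => add_nonneg (hf.1 i).2.2 (I.h_pos i).le

lemma Feasible.hmax_le_height (hf : I.Feasible pos) : I.hmax ≤ I.height pos :=
  Real.iSup_le (fun i => by linarith [I.top_le_height pos i, (hf.1 i).2.2]) hf.height_nonneg

lemma Feasible.le_hOPT {c : ℝ} (hf : I.Feasible pos)
    (hc : ∀ p : Fin n → ℝ × ℝ, I.Feasible p → c ≤ I.height p) : c ≤ I.hOPT :=
  le_csInf ⟨_, pos, hf, rfl⟩ fun _ ⟨p, hp, hH⟩ => hH ▸ hc p hp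

lemma Feasible.sum_h_le_height_of_wide (hf : I.Feasible pos) {s : Finset (Fin n)}
    (hs : ∀ i ∈ s, I.W / 2 < (I.r i).w) : ∑ i ∈ s, (I.r i).h ≤ I.height pos := by
  have hmid : ∀ i ∈ s, (pos i).1 < I.W / 2 ∧ I.W / 2 < (pos i).1 + (I.r i).w := fun i hi => by
    have := hf.1 i
    constructor <;> linarith [hs i hi, this.1, this.2.1]
  have hdisj : (s : Set (Fin n)).PairwiseDisjoint
      fun i => Set.Ioo (pos i).2 ((pos i).2 + (I.r i).h) := by
    intro i hi j hj hij
    rcases openBox_disjoint_iff.1 (hf.2 hij) with hx | hy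
    · have := hmid i hi
      have := hmid j hj
      simp only [min_le_iff, le_max_iff] at hx
      rcases hx with (hx | hx) | (hx | hx) <;> linarith
    · exact Set.Ioo_disjoint_Ioo.2 hy
  simpa using sum_le_of_pairwiseDisjoint_Ioo (fun i _ => (I.h_pos i).le) hf.height_nonneg
    (fun i _ => ⟨(hf.1 i).2.2, I.top_le_height pos i⟩) hdisj

lemma IsBL.y_le (hBL : I.IsBL pos) {i : Fin n} {M : ℝ} (hM : 0 ≤ M)
    (htop : ∀ j < i, (pos j).2 + (I.r j).h ≤ M) : (pos i).2 ≤ M := by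
  have hfeas : I.FeasibleAt pos i (0, M) :=
    ⟨⟨le_rfl, by simpa using I.w_le_W i, hM⟩, fun j hj => openBox_disjoint_iff.2 <|
      Or.inr <| (min_le_right _ _).trans <| (htop j hj).trans (le_max_left _ _)⟩
  rcases (hBL i).2 _ hfeas with h | h
  · exact h.le
  · exact h.1.le

lemma IsBL.top_le_add_sum (hBL : I.IsBL pos) (S : Finset (Fin n)) {B : ℝ} (hB : 0 ≤ B)
    (hout : ∀ i ∉ S, (pos i).2 + (I.r i).h ≤ B) (i : Fin n) :
    (pos i).2 + (I.r i).h ≤ B + ∑ k ∈ S with k ≤ i, (I.r k).h := by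
  induction i using WellFoundedLT.induction with
  | _ i ih =>
  have hsum_nonneg : ∀ T : Finset (Fin n), 0 ≤ ∑ k ∈ T, (I.r k).h :=
    fun T => Finset.sum_nonneg fun k _ => (I.h_pos k).le
  by_cases hi : i ∈ S
  · have hy : (pos i).2 ≤ B + ∑ k ∈ S with k < i, (I.r k).h := by
      refine hBL.y_le (add_nonneg hB (hsum_nonneg _)) fun j hj => (ih j hj).trans ?_
      gcongr with k
      exact fun k _ _ => (I.h_pos k).le
    have hsplit : ({k ∈ S | k ≤ i} : Finset (Fin n)) = insert i {k ∈ S | k < i} := by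
      ext k
      simp only [Finset.mem_filter, Finset.mem_insert, le_iff_lt_or_eq]
      constructor
      · rintro ⟨hk, hlt | rfl⟩ <;> tauto
      · rintro (rfl | ⟨hk, hlt⟩) <;> tauto
    rw [hsplit, Finset.sum_insert (by simp)]
    linarith
  · exact (hout i hi).trans (le_add_of_nonneg_right (hsum_nonneg _))

lemma IsBL.height_le_add_sum (hBL : I.IsBL pos) (S : Finset (Fin n)) {B : ℝ} (hB : 0 ≤ B)
    (hout : ∀ i ∉ S, (pos i).2 + (I.r i).h ≤ B) : I.height pos ≤ B + ∑ k ∈ S, (I.r k).h := by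
  have hS : ∀ T ⊆ S, ∑ k ∈ T, (I.r k).h ≤ ∑ k ∈ S, (I.r k).h := fun T hT =>
    Finset.sum_le_sum_of_subset_of_nonneg hT fun k _ _ => (I.h_pos k).le
  refine Real.iSup_le (fun i => (hBL.top_le_add_sum S hB hout i).trans ?_) ?_
  · linarith [hS _ (Finset.filter_subset (· ≤ i) S)]
  · exact add_nonneg hB (Finset.sum_nonneg fun k _ => (I.h_pos k).le)

theorem IsBL.pos_eq_prefixWidth (hBL : I.IsBL pos) {a : ℕ} (ha : I.prefixWidth a ≤ I.W)
    (i : Fin n) (hi : (i : ℕ) < a) : pos i = (I.prefixWidth i, 0) := by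
  induction i using WellFoundedLT.induction with
  | _ i ih =>
  have hpos : ∀ j < i, pos j = (I.prefixWidth j, 0) := fun j hj =>
    ih j hj ((Fin.lt_def.1 hj).trans hi)
  have hfeas : I.FeasibleAt pos i (I.prefixWidth i, 0) := by
    refine ⟨⟨I.prefixWidth_nonneg _, ?_, le_rfl⟩, fun j hj => ?_⟩
    · rw [← prefixWidth_succ]
      exact (I.prefixWidth_mono hi).trans ha
    · refine openBox_disjoint_iff.2 (Or.inl ((min_le_right _ _).trans ?_))
      rw [hpos j hj, ← prefixWidth_succ]
      exact (I.prefixWidth_mono (Fin.lt_def.1 hj)).trans (le_max_left _ _)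
  have hy0 := (hBL i).1.1.2.2
  obtain ⟨hy, hx⟩ : (pos i).2 = 0 ∧ (pos i).1 ≤ I.prefixWidth i := by
    rcases (hBL i).2 _ hfeas with h | h
    · exact absurd h (not_lt.2 hy0)
    · exact h
  refine Prod.ext (hx.antisymm (not_lt.1 fun hlt => ?_)) hy
  -- otherwise `(pos i).1` lies on the floor segment of an earlier rectangle `j`
  obtain ⟨k, hki, hkx, hxk⟩ := I.exists_prefixWidth_le_lt (hBL i).1.1.1 hlt
  let j : Fin n := ⟨k, hki.trans i.isLt⟩
  have hdisj := (hBL i).1.2 j hki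
  rw [hpos j hki, openBox_disjoint_iff, hy] at hdisj
  have hxj : (pos i).1 < I.prefixWidth j + (I.r j).w := I.prefixWidth_succ j ▸ hxk
  simp only [min_le_iff, le_max_iff] at hdisj
  rcases hdisj with ((h | h) | (h | h)) | ((h | h) | (h | h)) <;>
    linarith [I.w_pos i, I.h_pos i, I.h_pos j]

end SPInstance

namespace FQW

variable {n : ℕ} {I : SPInstance n} (d : FQW I)

lemma prefixWidth_card_F_le (hord : d.IsOrdered) : I.prefixWidth d.F.card ≤ I.W := by
  have hF : Finset.univ.filter (fun j : Fin n => (j : ℕ) < d.F.card) = d.F := by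
    ext j
    simp [hord.1 j]
  rw [SPInstance.prefixWidth, hF]
  exact I.sum_greedyF_le d.σ

lemma mem_F_or_mem_Q_of_notMem_Wset {i : Fin n} (hi : i ∉ d.Wset) : i ∈ d.F ∨ i ∈ d.Q := by
  by_cases hF : i ∈ d.F
  · exact Or.inl hF
  · simp_all [Wset, Q]

end FQW

/-- **Lemma.** If `Q = ∅`, or the highest top face of a rectangle of `Q` in the
BL packing is at height at most `h_max`, then the BL packing of the
FQW-ordered instance has height at most `2 · h_OPT`. -/
theorem bl_fqw_two_approx_of_low_Q {n : ℕ} (I : SPInstance n) (d : FQW I)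
    (hord : d.IsOrdered) (pos : Fin n → ℝ × ℝ) (hBL : I.IsBL pos)
    (hcond : d.Q = ∅ ∨ ∀ i ∈ d.Q, (pos i).2 + (I.r i).h ≤ I.hmax) :
    I.height pos ≤ 2 * I.hOPT := by
  have hfeas := hBL.feasible
  have hF : ∀ i ∈ d.F, (pos i).2 + (I.r i).h ≤ I.hmax := fun i hi => by
    rw [hBL.pos_eq_prefixWidth (d.prefixWidth_card_F_le hord) i ((hord.1 i).1 hi), zero_add]
    exact I.h_le_hmax i
  have hQ : ∀ i ∈ d.Q, (pos i).2 + (I.r i).h ≤ I.hmax := by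
    rcases hcond with h | h
    · simp [h]
    · exact h
  have hheight : I.height pos ≤ I.hmax + ∑ k ∈ d.Wset, (I.r k).h :=
    hBL.height_le_add_sum d.Wset I.hmax_nonneg fun i hi =>
      (d.mem_F_or_mem_Q_of_notMem_Wset hi).elim (hF i) (hQ i)
  have hmax : I.hmax ≤ I.hOPT := hfeas.le_hOPT fun p hp => hp.hmax_le_height
  have hWset : ∑ k ∈ d.Wset, (I.r k).h ≤ I.hOPT := hfeas.le_hOPT fun p hp =>
    hp.sum_h_le_height_of_wide fun i hi => (Finset.mem_filter.1 hi).2.2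
  linarith
end

section
/- Let (W, r_1, …, r_n) be a Strip Packing instance whose rectangles are listed in the FQW-ordering with Q ≠ ∅, and consider its BL packing. Then every proper horizontal line in the region H_{a+1} of the horizontal strip partition has occupied fraction at least 1/2. -/
open scoped Classical
open MeasureTheory

namespace SPHelper
variable {n : ℕ}

lemma greedy_sum_le (I : SPInstance n) (σ : Equiv.Perm (Fin n)) :
    ∑ f ∈ I.greedyF σ, (I.r f).w ≤ I.W := by
  unfold SPInstance.greedyF
  have key : ∀ (l : List (Fin n)) (F0 : Finset (Fin n)),
      ∑ f ∈ F0, (I.r f).w ≤ I.W →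
      ∑ f ∈ (l.foldl (fun F k =>
        if (I.r (σ k)).w + ∑ f ∈ F, (I.r f).w ≤ I.W then insert (σ k) F else F) F0),
        (I.r f).w ≤ I.W := by
    intro l
    induction l with
    | nil => intro F0 h; simpa using h
    | cons k l ih =>
      intro F0 h
      simp only [List.foldl_cons]
      apply ih
      by_cases hc : (I.r (σ k)).w + ∑ f ∈ F0, (I.r f).w ≤ I.W
      · rw [if_pos hc]
        by_cases hm : σ k ∈ F0
        · rwa [Finset.insert_eq_self.2 hm]
        · rw [Finset.sum_insert hm]; exact hc
      · rwa [if_neg hc]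
  apply key
  simpa using I.W_pos.le

/-- Cumulative width of rectangles before `f`. -/
noncomputable def Xc (I : SPInstance n) (f : Fin n) : ℝ :=
  ∑ g ∈ Finset.univ.filter (fun g : Fin n => g < f), (I.r g).w

lemma Xc_nonneg (I : SPInstance n) (f : Fin n) : 0 ≤ Xc I f :=
  Finset.sum_nonneg fun g _ => (I.w_pos g).le

lemma Xc_add_w (I : SPInstance n) (f : Fin n) :
    Xc I f + (I.r f).w = ∑ g ∈ Finset.univ.filter (fun g : Fin n => g ≤ f), (I.r g).w := by
  have h : Finset.univ.filter (fun g : Fin n => g ≤ f)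
      = insert f (Finset.univ.filter (fun g : Fin n => g < f)) := by
    ext g
    simp only [Finset.mem_filter, Finset.mem_univ, true_and, Finset.mem_insert]
    constructor
    · intro h; rcases eq_or_lt_of_le h with h | h
      · exact Or.inl h
      · exact Or.inr h
    · rintro (rfl | h); · exact le_refl _
      · exact h.le
  rw [h, Finset.sum_insert (by simp)]
  unfold Xc
  ring

lemma Xc_add_w_le (I : SPInstance n) {f g : Fin n} (hfg : f < g) :
    Xc I f + (I.r f).w ≤ Xc I g := by
  rw [Xc_add_w]
  apply Finset.sum_le_sum_of_subset_of_nonneg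
  · intro x hx
    simp only [Finset.mem_filter, Finset.mem_univ, true_and] at hx ⊢
    exact lt_of_le_of_lt hx hfg
  · exact fun i _ _ => (I.w_pos i).le

/-- All rectangles of the prefix `{f : (f:ℕ) < a}` are placed at `(Xc f, 0)`
by the BL algorithm, provided the total prefix width is at most `W`. -/
lemma BL_prefix_placement (I : SPInstance n) (pos : Fin n → ℝ × ℝ)
    (hBL : I.IsBL pos) (a : ℕ)
    (hsum : ∑ g ∈ Finset.univ.filter (fun g : Fin n => (g : ℕ) < a), (I.r g).w ≤ I.W) :
    ∀ f : Fin n, (f : ℕ) < a → pos f = (Xc I f, 0) := by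
  have key : ∀ m : ℕ, ∀ f : Fin n, (f : ℕ) = m → (f : ℕ) < a → pos f = (Xc I f, 0) := by
    intro m
    induction m using Nat.strong_induction_on with
    | _ m IH =>
    intro f hfm hfa
    have IH' : ∀ g : Fin n, g < f → pos g = (Xc I g, 0) := by
      intro g hg
      exact IH (g : ℕ) (hfm ▸ hg) g rfl (lt_trans hg hfa)
    obtain ⟨hfeas, hmin⟩ := hBL f
    -- candidate position
    have hcand : I.FeasibleAt pos f (Xc I f, 0) := by
      refine ⟨⟨Xc_nonneg I f, ?_, le_refl 0⟩, ?_⟩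
      · rw [Xc_add_w]
        refine le_trans (Finset.sum_le_sum_of_subset_of_nonneg ?_
          (fun i _ _ => (I.w_pos i).le)) hsum
        intro x hx
        simp only [Finset.mem_filter, Finset.mem_univ, true_and] at hx ⊢
        exact lt_of_le_of_lt (Fin.le_iff_val_le_val.1 hx) hfa
      · intro j hj
        rw [IH' j hj]
        have hle : Xc I j + (I.r j).w ≤ Xc I f := Xc_add_w_le I hj
        rw [Set.disjoint_left]
        rintro ⟨px, py⟩ hp hq
        simp only [openBox, Set.mem_prod, Set.mem_Ioo] at hp hq
        linarith [hp.1.1, hq.1.2]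
    have hlex := hmin _ hcand
    have hy0 : 0 ≤ (pos f).2 := hfeas.1.2.2
    have hyeq : (pos f).2 = 0 := by
      rcases hlex with h | h
      · exact absurd h (not_lt.2 hy0)
      · exact h.1
    have hxle : (pos f).1 ≤ Xc I f := by
      rcases hlex with h | h
      · simp only [hyeq] at h; exact absurd h (lt_irrefl 0)
      · exact h.2
    have hxge : Xc I f ≤ (pos f).1 := by
      by_contra hlt
      push_neg at hlt
      have hx0 : 0 ≤ (pos f).1 := hfeas.1.1
      -- find g < f with Xc g ≤ x f < Xc g + w g
      have hne : (Finset.univ.filter (fun g : Fin n => g < f ∧ Xc I g ≤ (pos f).1)).Nonempty := by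
        have hn0 : (f : ℕ) ≠ 0 := by
          intro h0
          have : Xc I f = 0 := by
            unfold Xc
            apply Finset.sum_eq_zero
            intro g hg
            simp only [Finset.mem_filter, Finset.mem_univ, true_and, Fin.lt_iff_val_lt_val, h0] at hg
            omega
          linarith
        refine ⟨⟨0, lt_of_le_of_lt (Nat.zero_le _) f.isLt⟩, ?_⟩
        simp only [Finset.mem_filter, Finset.mem_univ, true_and]
        constructor
        · exact Fin.lt_iff_val_lt_val.2 (by simpa using Nat.pos_of_ne_zero hn0)
        · have : Xc I ⟨0, lt_of_le_of_lt (Nat.zero_le _) f.isLt⟩ = 0 := by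
            unfold Xc
            apply Finset.sum_eq_zero
            intro g hg
            simp only [Finset.mem_filter, Finset.mem_univ, true_and, Fin.lt_iff_val_lt_val] at hg
            omega
          rw [this]; exact hx0
      set S := Finset.univ.filter (fun g : Fin n => g < f ∧ Xc I g ≤ (pos f).1) with hS
      obtain g := S.max' hne
      have hgmem := S.max'_mem hne
      set g := S.max' hne with hgdef
      simp only [hS, Finset.mem_filter, Finset.mem_univ, true_and] at hgmem
      obtain ⟨hgf, hgx⟩ := hgmem
      have hgx2 : (pos f).1 < Xc I g + (I.r g).w := by
        by_contra hge
        push_neg at hge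
        -- consider g+1
        have hg1 : (g : ℕ) + 1 < n := lt_of_le_of_lt (Fin.lt_iff_val_lt_val.1 hgf) f.isLt
        set g' : Fin n := ⟨(g : ℕ) + 1, hg1⟩ with hg'
        have hXg' : Xc I g' = Xc I g + (I.r g).w := by
          rw [Xc_add_w]
          unfold Xc
          congr 1
          ext x
          simp only [Finset.mem_filter, Finset.mem_univ, true_and,
            Fin.lt_iff_val_lt_val, Fin.le_iff_val_le_val, hg']
          omega
        have hg'f : g' < f := by
          rcases lt_or_ge g' f with h | h
          · exact h
          · exfalso
            have : Xc I f ≤ Xc I g' := by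
              unfold Xc
              apply Finset.sum_le_sum_of_subset_of_nonneg
              · intro x hx
                simp only [Finset.mem_filter, Finset.mem_univ, true_and] at hx ⊢
                exact lt_of_lt_of_le hx h
              · exact fun i _ _ => (I.w_pos i).le
            rw [hXg'] at this
            linarith
        have hg'S : g' ∈ S := by
          simp only [hS, Finset.mem_filter, Finset.mem_univ, true_and]
          exact ⟨hg'f, by rw [hXg']; exact hge⟩
        have := Finset.le_max' S g' hg'S
        rw [← hgdef] at this
        have : (g' : ℕ) ≤ (g : ℕ) := Fin.le_iff_val_le_val.1 this
        simp [hg'] at this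
      -- now boxes of f and g overlap
      have hdisj := hfeas.2 g hgf
      rw [IH' g hgf] at hdisj
      rw [Set.disjoint_left] at hdisj
      have hwf := I.w_pos f
      have hwg := I.w_pos g
      have hhf := I.h_pos f
      have hhg := I.h_pos g
      apply hdisj (a := (((pos f).1 + min ((pos f).1 + (I.r f).w) (Xc I g + (I.r g).w)) / 2,
        min (I.r f).h (I.r g).h / 2))
      · simp only [openBox, Set.mem_prod, Set.mem_Ioo, hyeq]
        constructor
        · constructor
          · have : (pos f).1 < min ((pos f).1 + (I.r f).w) (Xc I g + (I.r g).w) :=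
              lt_min (by linarith) hgx2
            linarith
          · have := min_le_left ((pos f).1 + (I.r f).w) (Xc I g + (I.r g).w)
            linarith [lt_min (show (pos f).1 < (pos f).1 + (I.r f).w by linarith) hgx2]
        · constructor
          · positivity
          · have := min_le_left (I.r f).h (I.r g).h
            linarith
      · simp only [openBox, Set.mem_prod, Set.mem_Ioo]
        constructor
        · constructor
          · have : (pos f).1 < min ((pos f).1 + (I.r f).w) (Xc I g + (I.r g).w) :=
              lt_min (by linarith) hgx2
            linarith
          · have := min_le_right ((pos f).1 + (I.r f).w) (Xc I g + (I.r g).w)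
            linarith [lt_min (show (pos f).1 < (pos f).1 + (I.r f).w by linarith) hgx2]
        · constructor
          · positivity
          · have := min_le_right (I.r f).h (I.r g).h
            linarith
    exact Prod.ext (le_antisymm hxle hxge) hyeq
  exact fun f hf => key (f : ℕ) f rfl hf

end SPHelper

namespace SPHelper
variable {n : ℕ}

lemma Ioo_disjoint {a b c d : ℝ} (h : b ≤ c) : Disjoint (Set.Ioo a b) (Set.Ioo c d) := by
  rw [Set.disjoint_left]
  intro x hx hx'
  simp only [Set.mem_Ioo] at hx hx'
  linarith [hx.2, hx'.1]

end SPHelper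

theorem main_thm {n : ℕ} (I : SPInstance n) (d : FQW I)
    (hord : d.IsOrdered) (pos : Fin n → ℝ × ℝ) (hBL : I.IsBL pos)
    (hQ : d.Q.Nonempty) (ia : Fin n) (hia : (ia : ℕ) = d.F.card)
    (t : ℝ) (hproper : I.ProperLine pos t)
    (hlow : maxYBelow pos (ia : ℕ) ≤ t) (hhigh : t < (pos ia).2) :
    1 / 2 ≤ I.occFrac pos t := by
  classical
  obtain ⟨h1, h2, h3, h4⟩ := hord
  set a := d.F.card with ha
  -- F is the prefix
  have hFsum : ∑ g ∈ Finset.univ.filter (fun g : Fin n => (g : ℕ) < a), (I.r g).w ≤ I.W := by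
    have : Finset.univ.filter (fun g : Fin n => (g : ℕ) < a) = d.F := by
      ext g
      simp only [Finset.mem_filter, Finset.mem_univ, true_and]
      exact (h1 g).symm
    rw [this]
    exact SPHelper.greedy_sum_le I d.σ
  have hplace := SPHelper.BL_prefix_placement I pos hBL a hFsum
  -- t ≥ 0
  have ht0 : 0 ≤ t := by
    refine le_trans ?_ hlow
    unfold maxYBelow
    rcases Nat.eq_zero_or_pos (ia : ℕ) with h0 | hpos0
    · rw [h0]
      have : IsEmpty {j : Fin n // (j : ℕ) < 0} := ⟨fun j => Nat.not_lt_zero _ j.2⟩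
      rw [Real.iSup_of_isEmpty]
    · have hne : Nonempty {j : Fin n // (j : ℕ) < (ia : ℕ)} :=
        ⟨⟨⟨0, lt_of_le_of_lt (Nat.zero_le _) ia.isLt⟩, hpos0⟩⟩
      have : ∀ j : {j : Fin n // (j : ℕ) < (ia : ℕ)}, (pos (j : Fin n)).2 = 0 := by
        intro j
        rw [hplace j (hia ▸ j.2)]
      calc (0 : ℝ) = (pos ((Classical.arbitrary {j : Fin n // (j : ℕ) < (ia : ℕ)}) : Fin n)).2 := 
              (this _).symm
        _ ≤ ⨆ j : {j : Fin n // (j : ℕ) < (ia : ℕ)}, (pos (j : Fin n)).2 := by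
              apply le_ciSup (f := fun j : {j : Fin n // (j : ℕ) < (ia : ℕ)} => (pos (j : Fin n)).2)
              exact (Set.finite_range _).bddAbove
  -- ia ∈ Q, width ≤ W/2
  have hQmem : ia ∈ d.Q := by
    rw [h2 ia, hia]
    exact ⟨le_refl _, Nat.lt_add_of_pos_right (Finset.card_pos.2 hQ)⟩
  have hwia : (I.r ia).w ≤ I.W / 2 := by
    have := (Finset.mem_filter.1 hQmem).2.2
    linarith [not_lt.1 this]
  -- the crossing prefix
  set P : Finset (Fin n) := Finset.univ.filter (fun f : Fin n => (f : ℕ) < a ∧ t < (I.r f).h)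
    with hP
  set c : ℝ := ∑ f ∈ P, (I.r f).w with hc
  have hc0 : 0 ≤ c := Finset.sum_nonneg fun f _ => (I.w_pos f).le
  -- main BL contradiction: c + w ia > W
  have hcW : I.W < c + (I.r ia).w := by
    by_contra hle
    push_neg at hle
    have hfeas : I.FeasibleAt pos ia (c, t) := by
      refine ⟨⟨hc0, hle, ht0⟩, ?_⟩
      intro j hj
      by_contra hnd
      rw [Set.not_disjoint_iff] at hnd
      obtain ⟨⟨qx, qy⟩, hq1, hq2⟩ := hnd
      have hja : (j : ℕ) < a := hia ▸ (Fin.lt_iff_val_lt_val.1 hj)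
      rw [hplace j hja] at hq2
      simp only [openBox, Set.mem_prod, Set.mem_Ioo] at hq1 hq2
      -- j crosses the line: t < h j
      have hjh : t < (I.r j).h := by linarith [hq1.2.1, hq2.2.2]
      -- j ∈ P, and prefix {g ≤ j} ⊆ P
      have hsub : Finset.univ.filter (fun g : Fin n => g ≤ j) ⊆ P := by
        intro g hg
        simp only [Finset.mem_filter, Finset.mem_univ, true_and] at hg
        simp only [hP, Finset.mem_filter, Finset.mem_univ, true_and]
        have hglt : (g : ℕ) < a := lt_of_le_of_lt (Fin.le_iff_val_le_val.1 hg) hja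
        refine ⟨hglt, lt_of_lt_of_le hjh ?_⟩
        exact h3 g j (Fin.le_iff_val_le_val.1 hg) hja
      have hjc : SPHelper.Xc I j + (I.r j).w ≤ c := by
        rw [SPHelper.Xc_add_w, hc]
        exact Finset.sum_le_sum_of_subset_of_nonneg hsub fun i _ _ => (I.w_pos i).le
      linarith [hq1.1.1, hq2.1.2]
    rcases (hBL ia).2 _ hfeas with h | h
    · simp only at h; linarith
    · simp only at h; linarith [h.1]
  -- each f ∈ P intersects the line, pieces in occupied
  have hsubocc : ∀ f ∈ P, Set.Ioo (SPHelper.Xc I f) (SPHelper.Xc I f + (I.r f).w)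
      ⊆ I.occupied pos t := by
    intro f hf
    simp only [hP, Finset.mem_filter, Finset.mem_univ, true_and] at hf
    have hpf := hplace f hf.1
    have hint : I.Intersects pos f t := by
      constructor
      · have hne := (hproper f).1
        rw [hpf] at hne
        simp only at hne
        rw [hpf]
        exact lt_of_le_of_ne ht0 (Ne.symm hne)
      · rw [hpf]; simpa using hf.2
    intro x hx
    unfold SPInstance.occupied
    refine Set.mem_biUnion (show f ∈ {j : Fin n | I.Intersects pos j t} from hint) ?_
    rw [hpf]
    exact Set.Ioo_subset_Icc_self hx
  -- measure bound
  have hmeas : ENNReal.ofReal c ≤ volume (I.occupied pos t) := by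
    have hdisj : (↑P : Set (Fin n)).PairwiseDisjoint
        (fun f => Set.Ioo (SPHelper.Xc I f) (SPHelper.Xc I f + (I.r f).w)) := by
      intro f _ g _ hfg
      rcases lt_or_gt_of_ne hfg with h | h
      · exact SPHelper.Ioo_disjoint (SPHelper.Xc_add_w_le I h)
      · exact (SPHelper.Ioo_disjoint (SPHelper.Xc_add_w_le I h)).symm
    have hvol : volume (⋃ f ∈ P, Set.Ioo (SPHelper.Xc I f) (SPHelper.Xc I f + (I.r f).w))
        = ∑ f ∈ P, ENNReal.ofReal (I.r f).w := by
      rw [measure_biUnion_finset hdisj fun f _ => measurableSet_Ioo]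
      congr 1
      ext f
      rw [Real.volume_Ioo]
      congr 1
      ring
    calc ENNReal.ofReal c = ∑ f ∈ P, ENNReal.ofReal (I.r f).w := by
          rw [hc, ENNReal.ofReal_sum_of_nonneg fun f _ => (I.w_pos f).le]
      _ = volume (⋃ f ∈ P, Set.Ioo (SPHelper.Xc I f) (SPHelper.Xc I f + (I.r f).w)) := hvol.symm
      _ ≤ volume (I.occupied pos t) := by
          apply measure_mono
          exact Set.iUnion₂_subset hsubocc
  have hupper : volume (I.occupied pos t) ≤ ENNReal.ofReal I.W := by
    have : I.occupied pos t ⊆ Set.Icc 0 I.W := by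
      unfold SPInstance.occupied
      apply Set.iUnion₂_subset
      intro j _
      have hs := ((hBL j).1).1
      exact Set.Icc_subset_Icc hs.1 hs.2.1
    calc volume (I.occupied pos t) ≤ volume (Set.Icc 0 I.W) := measure_mono this
      _ = ENNReal.ofReal I.W := by rw [Real.volume_Icc, sub_zero]
  have hfin : volume (I.occupied pos t) ≠ ⊤ := ne_top_of_le_ne_top ENNReal.ofReal_ne_top hupper
  have htr : c ≤ (volume (I.occupied pos t)).toReal := by
    have := ENNReal.toReal_mono hfin hmeas
    rwa [ENNReal.toReal_ofReal hc0] at this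
  unfold SPInstance.occFrac
  rw [le_div_iff₀ I.W_pos]
  linarith

/-- **Lemma.** Every proper horizontal line in the region `H_{a+1}` of the
horizontal strip partition of the BL packing of an FQW-ordered instance with
`Q ≠ ∅` is at least half occupied.  Here `ia` is the (`0`-based) index of the
first rectangle of `Q`, i.e. `(ia : ℕ) = |F| = a`. -/
theorem H_a_add_one_half_occupied {n : ℕ} (I : SPInstance n) (d : FQW I)
    (hord : d.IsOrdered) (pos : Fin n → ℝ × ℝ) (hBL : I.IsBL pos)
    (hQ : d.Q.Nonempty) (ia : Fin n) (hia : (ia : ℕ) = d.F.card)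
    (t : ℝ) (hproper : I.ProperLine pos t)
    (hlow : maxYBelow pos (ia : ℕ) ≤ t) (hhigh : t < (pos ia).2) :
    1 / 2 ≤ I.occFrac pos t :=
  main_thm I d hord pos hBL hQ ia hia t hproper hlow hhigh
end

section
/- Let (W, r_1, …, r_n) be a Strip Packing instance whose rectangles are listed in the FQW-ordering with Q ≠ ∅, and consider its BL packing. Then the region H' = [0, W] × ([0, h_{r_T}] ∪ [y_{r_T}, y_{r_T} + h_{r_T}]) is at least half occupied: the total area of the intersections of the placed closed rectangles [x_r, x_r + w_r] × [y_r, y_r + h_r] with H' is at least W · h_{r_T}, which is half of the area of H'. -/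
open scoped Classical
open MeasureTheory

namespace BLaux

variable {n : ℕ}

theorem foldl_subset {α β : Type*} (f : Finset α → β → Finset α)
    (hstep : ∀ s b, s ⊆ f s b) (l : List β) (s : Finset α) :
    s ⊆ l.foldl f s := by
  induction l generalizing s with
  | nil => simp
  | cons b l ih => exact fun x hx => ih _ (hstep s b hx)

theorem foldl_mem {α β : Type*} [DecidableEq α] (f : Finset α → β → Finset α) (g : β → α)
    (hstep : ∀ s b, f s b = s ∨ f s b = insert (g b) s) (l : List β) (s : Finset α) :
    ∀ x ∈ l.foldl f s, x ∈ s ∨ ∃ b ∈ l, x = g b := by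
  induction l generalizing s with
  | nil => simp
  | cons b l ih =>
    intro x hx
    rcases ih (f s b) x hx with h | ⟨c, hc, rfl⟩
    · rcases hstep s b with he | he
      · rw [he] at h; exact Or.inl h
      · rw [he, Finset.mem_insert] at h
        rcases h with rfl | h
        · exact Or.inr ⟨b, by simp⟩
        · exact Or.inl h
    · exact Or.inr ⟨c, by simp [hc]⟩

theorem foldl_sum_le {α β : Type*} [DecidableEq α] (w : α → ℝ) (W : ℝ) (g : β → α)
    (f : Finset α → β → Finset α)
    (hstep : ∀ s b, f s b = if w (g b) + ∑ x ∈ s, w x ≤ W then insert (g b) s else s)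
    (l : List β) (s : Finset α) (hs : ∑ x ∈ s, w x ≤ W) :
    ∑ x ∈ l.foldl f s, w x ≤ W := by
  induction l generalizing s with
  | nil => simpa using hs
  | cons b l ih =>
    apply ih
    rw [hstep]
    split_ifs with hc
    · by_cases hm : g b ∈ s
      · simpa [Finset.insert_eq_self.mpr hm] using hs
      · rw [Finset.sum_insert hm]; exact hc
    · exact hs

theorem greedy_sum_le (I : SPInstance n) (σ : Equiv.Perm (Fin n)) :
    ∑ f ∈ I.greedyF σ, (I.r f).w ≤ I.W := by
  apply foldl_sum_le (fun a => (I.r a).w) I.W σ _ _ (List.finRange n) ∅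
    (by simpa using le_of_lt I.W_pos)
  intro s b
  simp only []

theorem greedy_step_subset (I : SPInstance n) (σ : Equiv.Perm (Fin n)) :
    ∀ (s : Finset (Fin n)) (b : Fin n), s ⊆
      (if (I.r (σ b)).w + ∑ f ∈ s, (I.r f).w ≤ I.W then insert (σ b) s else s) := by
  intro s b
  split_ifs
  · exact Finset.subset_insert _ _
  · exact le_refl s

theorem greedy_reject (I : SPInstance n) (σ : Equiv.Perm (Fin n)) (k0 : Fin n)
    (hnot : σ k0 ∉ I.greedyF σ) :
    ∃ s : Finset (Fin n), s ⊆ I.greedyF σ ∧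
      (∀ x ∈ s, ∃ k : Fin n, (k : ℕ) < (k0 : ℕ) ∧ x = σ k) ∧
      I.W < (I.r (σ k0)).w + ∑ x ∈ s, (I.r x).w := by
  classical
  set f : Finset (Fin n) → Fin n → Finset (Fin n) :=
    fun F k => if (I.r (σ k)).w + ∑ f ∈ F, (I.r f).w ≤ I.W then insert (σ k) F else F with hf
  have hlen : (k0 : ℕ) < (List.finRange n).length := by simpa using k0.isLt
  have hsplit : List.finRange n =
      (List.finRange n).take (k0 : ℕ) ++ ((List.finRange n)[(k0 : ℕ)]'hlen) ::
        (List.finRange n).drop ((k0 : ℕ) + 1) := by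
    rw [← List.drop_eq_getElem_cons, List.take_append_drop]
  have hget : (List.finRange n)[(k0 : ℕ)]'hlen = k0 := by
    simp [List.getElem_finRange]
  set s0 : Finset (Fin n) := ((List.finRange n).take (k0 : ℕ)).foldl f ∅ with hs0
  have hgF : I.greedyF σ = ((List.finRange n).drop ((k0 : ℕ) + 1)).foldl f (f s0 k0) := by
    show (List.finRange n).foldl f ∅ = _
    conv_lhs => rw [hsplit]
    rw [List.foldl_append, hget]
    rfl
  have hstep_sub : ∀ (s : Finset (Fin n)) (b : Fin n), s ⊆ f s b := greedy_step_subset I σ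
  have hcond : ¬ ((I.r (σ k0)).w + ∑ x ∈ s0, (I.r x).w ≤ I.W) := by
    intro hc
    apply hnot
    rw [hgF]
    apply foldl_subset f hstep_sub
    rw [hf]
    simp only [if_pos hc]
    exact Finset.mem_insert_self _ _
  refine ⟨s0, ?_, ?_, by linarith [not_le.mp hcond]⟩
  · rw [hgF]
    exact (hstep_sub s0 k0).trans (foldl_subset f hstep_sub _ _)
  · intro x hx
    rcases foldl_mem f σ (fun s b => by
        rw [hf]; simp only []; split_ifs with h
        · exact Or.inr rfl
        · exact Or.inl rfl) _ _ x hx with h | ⟨b, hb, rfl⟩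
    · simp at h
    · refine ⟨b, ?_, rfl⟩
      rw [List.mem_take_iff_getElem] at hb
      obtain ⟨i, hi, rfl⟩ := hb
      simp only [List.getElem_finRange]
      simp at hi ⊢
      omega

noncomputable def BLP (I : SPInstance n) (k : ℕ) : ℝ :=
  ∑ j ∈ Finset.univ.filter (fun j : Fin n => (j : ℕ) < k), (I.r j).w

theorem BLP_mono (I : SPInstance n) {k k' : ℕ} (h : k ≤ k') : BLP I k ≤ BLP I k' := by
  apply Finset.sum_le_sum_of_subset_of_nonneg
  · intro j hj
    simp only [Finset.mem_filter, Finset.mem_univ, true_and] at hj ⊢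
    omega
  · intro j _ _; exact le_of_lt (I.w_pos j)

theorem BLP_nonneg (I : SPInstance n) (k : ℕ) : 0 ≤ BLP I k :=
  Finset.sum_nonneg fun j _ => le_of_lt (I.w_pos j)

theorem BLP_zero (I : SPInstance n) : BLP I 0 = 0 := by simp [BLP]

theorem BLP_succ (I : SPInstance n) (j : Fin n) :
    BLP I ((j : ℕ) + 1) = BLP I (j : ℕ) + (I.r j).w := by
  classical
  have : Finset.univ.filter (fun i : Fin n => (i : ℕ) < (j : ℕ) + 1)
      = insert j (Finset.univ.filter (fun i : Fin n => (i : ℕ) < (j : ℕ))) := by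
    ext i
    simp only [Finset.mem_filter, Finset.mem_univ, true_and, Finset.mem_insert]
    constructor
    · intro h
      rcases Nat.lt_succ_iff_lt_or_eq.mp h with h | h
      · exact Or.inr h
      · exact Or.inl (Fin.ext h)
    · rintro (rfl | h) <;> omega
  rw [BLP, this, Finset.sum_insert, add_comm, BLP]
  simp

theorem BLP_exists_interval (I : SPInstance n) {x : ℝ} {m : ℕ}
    (hm : m ≤ n) (hx : 0 ≤ x) (hxm : x < BLP I m) :
    ∃ j : Fin n, (j : ℕ) < m ∧ BLP I (j : ℕ) ≤ x ∧ x < BLP I ((j : ℕ) + 1) := by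
  classical
  have h0 : (0 : ℕ) < m := by
    by_contra h
    push_neg at h
    interval_cases m
    rw [BLP_zero] at hxm; linarith
  set Q : ℕ → Prop := fun k => BLP I k ≤ x with hQdef
  have hQ0 : Q 0 := by rw [hQdef]; simpa [BLP_zero] using hx
  set k := Nat.findGreatest Q (m - 1) with hk
  have hkle : k ≤ m - 1 := Nat.findGreatest_le _
  have hkQ : Q k := Nat.findGreatest_spec (Nat.zero_le _) hQ0
  have hknot : ¬ Q (k + 1) := by
    by_cases hc : k + 1 ≤ m - 1
    · exact Nat.findGreatest_is_greatest (Nat.lt_succ_self k) hc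
    · have : k + 1 = m := by omega
      rw [this]
      intro h
      exact absurd hxm (not_lt.mpr h)
  have hkm : k < m := by omega
  refine ⟨⟨k, lt_of_lt_of_le hkm hm⟩, hkm, hkQ, ?_⟩
  simpa using not_le.mp hknot

theorem posF (I : SPInstance n) (pos : Fin n → ℝ × ℝ) (hBL : I.IsBL pos)
    {a : ℕ} (ha : BLP I a ≤ I.W) :
    ∀ j : Fin n, (j : ℕ) < a → pos j = (BLP I (j : ℕ), 0) := by
  suffices key : ∀ N : ℕ, ∀ j : Fin n, (j : ℕ) = N → (j : ℕ) < a →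
      pos j = (BLP I (j : ℕ), 0) by
    intro j hj; exact key (j : ℕ) j rfl hj
  intro N
  induction N using Nat.strong_induction_on with
  | _ N IHN =>
  rintro j rfl hj
  have IH : ∀ k : Fin n, k < j → (k : ℕ) < a → pos k = (BLP I (k : ℕ), 0) :=
    fun k hkj hka => IHN (k : ℕ) (Fin.lt_def.mp hkj) k rfl hka
  obtain ⟨⟨hx0, hxW, hy0⟩, hdisj⟩ := (hBL j).1
  have hfeasP : I.FeasibleAt pos j (BLP I (j : ℕ), 0) := by
    refine ⟨⟨BLP_nonneg I _, ?_, le_refl 0⟩, ?_⟩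
    · show BLP I (j : ℕ) + (I.r j).w ≤ I.W
      rw [← BLP_succ]
      exact (BLP_mono I hj).trans ha
    · intro k hkj
      have hka : (k : ℕ) < a := lt_trans hkj hj
      rw [IH k hkj hka]
      rw [Set.disjoint_left]
      rintro ⟨u, v⟩ hu hv
      simp only [openBox, Set.mem_prod, Set.mem_Ioo] at hu hv
      have h1 : BLP I ((k : ℕ) + 1) ≤ BLP I (j : ℕ) := BLP_mono I hkj
      rw [BLP_succ] at h1
      have h2 := hu.1.1
      have h3 := hv.1.2
      linarith
  rcases (hBL j).2 _ hfeasP with h | ⟨hy, hx⟩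
  · exact absurd h (not_lt.mpr hy0)
  · simp only at hy hx
    have hge : BLP I (j : ℕ) ≤ (pos j).1 := by
      by_contra hlt
      push_neg at hlt
      obtain ⟨k, hkj', hkle, hklt⟩ :=
        BLP_exists_interval I (le_of_lt j.isLt) hx0 hlt
      have hkj : k < j := hkj'
      have posk := IH k hkj (lt_trans hkj' hj)
      have hd := hdisj k hkj
      rw [posk] at hd
      have hBsucc := BLP_succ I k
      set t := ((pos j).1 + min ((pos j).1 + (I.r j).w) (BLP I ((k : ℕ) + 1))) / 2 with hts
      have hminx : (pos j).1 < min ((pos j).1 + (I.r j).w) (BLP I ((k : ℕ) + 1)) :=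
        lt_min (by linarith [I.w_pos j]) hklt
      have ht1 : (pos j).1 < t := by rw [hts]; linarith
      have ht2' : t < min ((pos j).1 + (I.r j).w) (BLP I ((k : ℕ) + 1)) := by
        rw [hts]; linarith
      have ht2 : t < (pos j).1 + (I.r j).w := lt_of_lt_of_le ht2' (min_le_left _ _)
      have ht3 : BLP I (k : ℕ) < t := lt_of_le_of_lt hkle ht1
      have ht4 : t < BLP I (k : ℕ) + (I.r k).w := by
        have := lt_of_lt_of_le ht2' (min_le_right _ _)
        linarith
      set sv := min (I.r j).h (I.r k).h / 2 with hsv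
      have hsv0 : 0 < sv := by
        rw [hsv]
        have := I.h_pos j
        have := I.h_pos k
        positivity
      have hsvj : sv < (I.r j).h := by
        have : min (I.r j).h (I.r k).h ≤ (I.r j).h := min_le_left _ _
        rw [hsv]; linarith [I.h_pos j]
      have hsvk : sv < (I.r k).h := by
        have : min (I.r j).h (I.r k).h ≤ (I.r k).h := min_le_right _ _
        rw [hsv]; linarith [I.h_pos k]
      have hm1 : (t, sv) ∈ openBox (I.r j) (pos j) := by
        simp only [openBox, Set.mem_prod, Set.mem_Ioo]
        refine ⟨⟨ht1, ht2⟩, ?_, ?_⟩ <;> rw [hy] <;> linarith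
      have hm2 : (t, sv) ∈ openBox (I.r k) (BLP I (k : ℕ), 0) := by
        simp only [openBox, Set.mem_prod, Set.mem_Ioo]
        exact ⟨⟨ht3, ht4⟩, hsv0, by linarith⟩
      exact Set.disjoint_left.mp hd hm1 hm2
    exact Prod.ext_iff.mpr ⟨le_antisymm hx hge, hy⟩

end BLaux

/-- **Lemma.** The space `H' = [0,W] × ([0, h_{r_T}] ∪ [y_{r_T}, y_{r_T} + h_{r_T}])`
is at least half occupied: the area of the intersection of the placed closed
rectangles with `H'` is at least `W · h_{r_T}`, which is half of the area
of `H'`. -/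
theorem Hprime_half_occupied {n : ℕ} (I : SPInstance n) (d : FQW I)
    (hord : d.IsOrdered) (pos : Fin n → ℝ × ℝ) (hBL : I.IsBL pos)
    (hQ : d.Q.Nonempty) (iT : Fin n) (hiT : IsTopRect I d pos iT) :
    I.W * (I.r iT).h ≤
      (volume ((⋃ j : Fin n, closedBox (I.r j) (pos j)) ∩ Hprime I pos iT)).toReal ∧
    (volume (Hprime I pos iT)).toReal = 2 * (I.W * (I.r iT).h) := by
  classical
  have hiTQ : iT ∈ d.Q := hiT.1
  have hmemQ := Finset.mem_filter.mp hiTQ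
  have hiT_notF : iT ∉ d.F := hmemQ.2.1
  have hwT2 : (I.r iT).w ≤ I.W / 2 := not_lt.mp hmemQ.2.2
  have ha_le_iT : d.F.card ≤ (iT : ℕ) := ((hord.2.1 iT).mp hiTQ).1
  set a := d.F.card with ha
  have han : a ≤ n := le_trans (Finset.card_le_univ _) (by simp)
  have hFeq : Finset.univ.filter (fun j : Fin n => (j : ℕ) < a) = d.F := by
    ext i
    simp only [Finset.mem_filter, Finset.mem_univ, true_and]
    exact (hord.1 i).symm
  have hPa : BLaux.BLP I a ≤ I.W := by
    rw [BLaux.BLP, hFeq]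
    exact BLaux.greedy_sum_le I d.σ
  have posF : ∀ j : Fin n, (j : ℕ) < a → pos j = (BLaux.BLP I (j : ℕ), 0) :=
    BLaux.posF I pos hBL hPa
  have hiT_eq : d.σ (d.σ.symm iT) = iT := Equiv.apply_symm_apply _ _
  obtain ⟨s, hsF, hsidx, hsum⟩ := BLaux.greedy_reject I d.σ (d.σ.symm iT)
    (by rw [hiT_eq]; exact hiT_notF)
  rw [hiT_eq] at hsum
  set T := d.F.filter (fun j => (I.r iT).h ≤ (I.r j).h) with hTdef
  have hsT : s ⊆ T := by
    intro x hx
    obtain ⟨k, hk, rfl⟩ := hsidx x hx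
    refine Finset.mem_filter.mpr ⟨hsF hx, ?_⟩
    have h1 : k ≤ d.σ.symm iT := Fin.le_def.mpr (le_of_lt hk)
    have h2 := d.sorted k (d.σ.symm iT) h1
    rwa [hiT_eq] at h2
  have hsumT : I.W - (I.r iT).w < ∑ x ∈ T, (I.r x).w := by
    have hle : ∑ x ∈ s, (I.r x).w ≤ ∑ x ∈ T, (I.r x).w :=
      Finset.sum_le_sum_of_subset_of_nonneg hsT (fun j _ _ => (I.w_pos j).le)
    linarith
  have hW2 : I.W / 2 ≤ I.W - (I.r iT).w := by linarith
  have hTne : T.Nonempty := by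
    rcases Finset.eq_empty_or_nonempty T with h | h
    · exfalso; rw [h, Finset.sum_empty] at hsumT; have := I.W_pos; linarith
    · exact h
  set m' := T.max' hTne with hm'def
  have hm'T : m' ∈ T := T.max'_mem hTne
  have hm'F : m' ∈ d.F := (Finset.mem_filter.mp hm'T).1
  have hm'h : (I.r iT).h ≤ (I.r m').h := (Finset.mem_filter.mp hm'T).2
  have hm'a : (m' : ℕ) < a := (hord.1 m').mp hm'F
  set M := (m' : ℕ) + 1 with hMdef
  have hMa : M ≤ a := hm'a
  have hT_iff : ∀ j : Fin n, j ∈ T ↔ (j : ℕ) < M := by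
    intro j
    constructor
    · intro hj
      exact Nat.lt_succ_of_le (Fin.le_def.mp (T.le_max' j hj))
    · intro hj
      have hja : (j : ℕ) < a := lt_of_lt_of_le hj hMa
      refine Finset.mem_filter.mpr ⟨(hord.1 j).mpr hja, ?_⟩
      exact le_trans hm'h (hord.2.2.1 j m' (Nat.lt_succ_iff.mp hj) hm'a)
  have hTeq : Finset.univ.filter (fun j : Fin n => (j : ℕ) < M) = T := by
    ext i
    simp only [Finset.mem_filter, Finset.mem_univ, true_and]
    exact (hT_iff i).symm
  have hPM : BLaux.BLP I M = ∑ x ∈ T, (I.r x).w := by rw [BLaux.BLP, hTeq]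
  have hPMW : I.W - (I.r iT).w < BLaux.BLP I M := by rw [hPM]; exact hsumT
  have hPM_le : BLaux.BLP I M ≤ I.W := le_trans (BLaux.BLP_mono I hMa) hPa
  obtain ⟨⟨hxT0, hxTW, hyT0⟩, hdisjT⟩ := (hBL iT).1
  have hhT := I.h_pos iT
  have hwT := I.w_pos iT
  have hWpos := I.W_pos
  -- Part C : the top rectangle sits at height at least its own height
  have hyTh : (I.r iT).h ≤ (pos iT).2 := by
    by_contra hlt
    push_neg at hlt
    have hxTM : (pos iT).1 < BLaux.BLP I M := by linarith
    obtain ⟨k, hkM, hkle, hklt⟩ :=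
      BLaux.BLP_exists_interval I (le_trans hMa han) hxT0 hxTM
    have hkT : k ∈ T := (hT_iff k).mpr hkM
    have hkh : (I.r iT).h ≤ (I.r k).h := (Finset.mem_filter.mp hkT).2
    have hka : (k : ℕ) < a := lt_of_lt_of_le hkM hMa
    have hkiT : k < iT := Fin.lt_def.mpr (lt_of_lt_of_le hka ha_le_iT)
    have hd := hdisjT k hkiT
    rw [posF k hka] at hd
    have hBsucc := BLaux.BLP_succ I k
    set t := ((pos iT).1 + min ((pos iT).1 + (I.r iT).w) (BLaux.BLP I ((k : ℕ) + 1))) / 2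
      with htdef
    have hminx : (pos iT).1 < min ((pos iT).1 + (I.r iT).w) (BLaux.BLP I ((k : ℕ) + 1)) :=
      lt_min (by linarith) hklt
    have hminx1 := min_le_left ((pos iT).1 + (I.r iT).w) (BLaux.BLP I ((k : ℕ) + 1))
    have hminx2 := min_le_right ((pos iT).1 + (I.r iT).w) (BLaux.BLP I ((k : ℕ) + 1))
    have ht1 : (pos iT).1 < t := by rw [htdef]; linarith
    have ht2 : t < (pos iT).1 + (I.r iT).w := by rw [htdef]; linarith
    have ht3 : BLaux.BLP I (k : ℕ) < t := lt_of_le_of_lt hkle ht1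
    have ht4 : t < BLaux.BLP I (k : ℕ) + (I.r k).w := by rw [htdef]; linarith
    set sv := ((pos iT).2 + min ((pos iT).2 + (I.r iT).h) ((I.r k).h)) / 2 with hsvdef
    have hminy : (pos iT).2 < min ((pos iT).2 + (I.r iT).h) ((I.r k).h) :=
      lt_min (by linarith) (by linarith)
    have hminy1 := min_le_left ((pos iT).2 + (I.r iT).h) ((I.r k).h)
    have hminy2 := min_le_right ((pos iT).2 + (I.r iT).h) ((I.r k).h)
    have hs1 : (pos iT).2 < sv := by rw [hsvdef]; linarith
    have hs2 : sv < (pos iT).2 + (I.r iT).h := by rw [hsvdef]; linarith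
    have hs3 : (0 : ℝ) < sv := lt_of_le_of_lt hyT0 hs1
    have hs4 : sv < (I.r k).h := by rw [hsvdef]; linarith
    have hm1 : (t, sv) ∈ openBox (I.r iT) (pos iT) := by
      simp only [openBox, Set.mem_prod, Set.mem_Ioo]
      exact ⟨⟨ht1, ht2⟩, hs1, hs2⟩
    have hm2 : (t, sv) ∈ openBox (I.r k) (BLaux.BLP I (k : ℕ), 0) := by
      simp only [openBox, Set.mem_prod, Set.mem_Ioo]
      exact ⟨⟨ht3, ht4⟩, hs3, by linarith⟩
    exact Set.disjoint_left.mp hd hm1 hm2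
  -- Part D : measure computations
  have hIccU : volume (Set.Icc (0 : ℝ) (I.r iT).h ∪
      Set.Icc (pos iT).2 ((pos iT).2 + (I.r iT).h))
      = ENNReal.ofReal (I.r iT).h + ENNReal.ofReal (I.r iT).h := by
    rcases eq_or_lt_of_le hyTh with heq | hlt
    · rw [← heq, Set.Icc_union_Icc_eq_Icc (le_of_lt hhT) (by linarith), Real.volume_Icc,
        ← ENNReal.ofReal_add (le_of_lt hhT) (le_of_lt hhT)]
      congr 1; ring
    · rw [measure_union ?hdis measurableSet_Icc, Real.volume_Icc, Real.volume_Icc]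
      · congr 2 <;> ring
      case hdis =>
        rw [Set.disjoint_left]
        rintro x ⟨_, hx1⟩ ⟨hx2, _⟩
        linarith
  have hHvol : volume (Hprime I pos iT)
      = ENNReal.ofReal I.W * (ENNReal.ofReal (I.r iT).h + ENNReal.ofReal (I.r iT).h) := by
    rw [Hprime, Measure.volume_eq_prod ℝ ℝ, Measure.prod_prod, Real.volume_Icc, hIccU,
      sub_zero]
  have hconj2 : (volume (Hprime I pos iT)).toReal = 2 * (I.W * (I.r iT).h) := by
    rw [hHvol, ENNReal.toReal_mul,
      ENNReal.toReal_add ENNReal.ofReal_ne_top ENNReal.ofReal_ne_top,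
      ENNReal.toReal_ofReal (le_of_lt hWpos), ENNReal.toReal_ofReal (le_of_lt hhT)]
    ring
  set A := Set.Icc (0 : ℝ) (BLaux.BLP I M) ×ˢ Set.Icc (0 : ℝ) (I.r iT).h with hAdef
  set B := Set.Icc (pos iT).1 ((pos iT).1 + (I.r iT).w) ×ˢ
    Set.Icc (pos iT).2 ((pos iT).2 + (I.r iT).h) with hBdef
  have hAsub : A ⊆ (⋃ j : Fin n, closedBox (I.r j) (pos j)) ∩ Hprime I pos iT := by
    rintro ⟨u, v⟩ ⟨hu, hv⟩
    simp only [Set.mem_Icc] at hu hv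
    constructor
    · obtain ⟨k, hkM, hk1, hk2⟩ : ∃ k : Fin n, (k : ℕ) < M ∧
          BLaux.BLP I (k : ℕ) ≤ u ∧ u ≤ BLaux.BLP I ((k : ℕ) + 1) := by
        rcases lt_or_eq_of_le hu.2 with hult | heq
        · obtain ⟨k, h1, h2, h3⟩ := BLaux.BLP_exists_interval I (le_trans hMa han) hu.1 hult
          exact ⟨k, h1, h2, le_of_lt h3⟩
        · exact ⟨m', Nat.lt_succ_self _,
            by rw [heq]; exact BLaux.BLP_mono I (Nat.le_succ _), le_of_eq heq⟩
      have hka : (k : ℕ) < a := lt_of_lt_of_le hkM hMa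
      have hkh : (I.r iT).h ≤ (I.r k).h := (Finset.mem_filter.mp ((hT_iff k).mpr hkM)).2
      rw [Set.mem_iUnion]
      refine ⟨k, ?_⟩
      rw [posF k hka]
      simp only [closedBox, Set.mem_prod, Set.mem_Icc]
      have hBsucc := BLaux.BLP_succ I k
      exact ⟨⟨hk1, by linarith⟩, by simpa using hv.1, by
        have := le_trans hv.2 hkh
        linarith⟩
    · simp only [Hprime, Set.mem_prod, Set.mem_Icc, Set.mem_union]
      exact ⟨⟨hu.1, le_trans hu.2 hPM_le⟩, Or.inl ⟨hv.1, hv.2⟩⟩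
  have hBsub : B ⊆ (⋃ j : Fin n, closedBox (I.r j) (pos j)) ∩ Hprime I pos iT := by
    rintro ⟨u, v⟩ ⟨hu, hv⟩
    simp only [Set.mem_Icc] at hu hv
    constructor
    · rw [Set.mem_iUnion]
      refine ⟨iT, ?_⟩
      simp only [closedBox, Set.mem_prod, Set.mem_Icc]
      exact ⟨hu, hv⟩
    · simp only [Hprime, Set.mem_prod, Set.mem_Icc, Set.mem_union]
      exact ⟨⟨le_trans hxT0 hu.1, le_trans hu.2 hxTW⟩, Or.inr ⟨hv.1, hv.2⟩⟩
  have hABsub : A ∪ B ⊆ (⋃ j : Fin n, closedBox (I.r j) (pos j)) ∩ Hprime I pos iT :=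
    Set.union_subset hAsub hBsub
  have hInter0 : volume (A ∩ B) = 0 := by
    have h2 : volume (Set.Icc (0 : ℝ) (I.r iT).h ∩
        Set.Icc (pos iT).2 ((pos iT).2 + (I.r iT).h)) = 0 := by
      rw [Set.Icc_inter_Icc, Real.volume_Icc]
      apply ENNReal.ofReal_eq_zero.mpr
      have h3 := min_le_left (I.r iT).h ((pos iT).2 + (I.r iT).h)
      have h4 := le_max_right (0 : ℝ) (pos iT).2
      linarith
    rw [hAdef, hBdef, Set.prod_inter_prod, Measure.volume_eq_prod ℝ ℝ, Measure.prod_prod,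
      h2, mul_zero]
  have hBmeas : MeasurableSet B := measurableSet_Icc.prod measurableSet_Icc
  have hAB : volume (A ∪ B)
      = ENNReal.ofReal (BLaux.BLP I M) * ENNReal.ofReal (I.r iT).h
        + ENNReal.ofReal (I.r iT).w * ENNReal.ofReal (I.r iT).h := by
    have hkey := measure_union_add_inter (μ := volume) A hBmeas
    rw [hInter0, add_zero] at hkey
    rw [hkey, hAdef, hBdef, Measure.volume_eq_prod ℝ ℝ, Measure.prod_prod,
      Measure.prod_prod, Real.volume_Icc, Real.volume_Icc, Real.volume_Icc, Real.volume_Icc]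
    congr 2 <;> ring_nf
  have hfin : volume ((⋃ j : Fin n, closedBox (I.r j) (pos j)) ∩ Hprime I pos iT) ≠ ⊤ := by
    apply ne_top_of_le_ne_top _ (measure_mono Set.inter_subset_right)
    rw [hHvol]
    exact ENNReal.mul_ne_top ENNReal.ofReal_ne_top
      (ENNReal.add_ne_top.mpr ⟨ENNReal.ofReal_ne_top, ENNReal.ofReal_ne_top⟩)
  refine ⟨?_, hconj2⟩
  have hle1 := measure_mono (μ := (volume : MeasureTheory.Measure (ℝ × ℝ))) hABsub
  have hmono := ENNReal.toReal_mono hfin hle1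
  rw [hAB] at hmono
  have hexp : (ENNReal.ofReal (BLaux.BLP I M) * ENNReal.ofReal (I.r iT).h
      + ENNReal.ofReal (I.r iT).w * ENNReal.ofReal (I.r iT).h).toReal
      = BLaux.BLP I M * (I.r iT).h + (I.r iT).w * (I.r iT).h := by
    rw [← ENNReal.ofReal_mul (BLaux.BLP_nonneg I M), ← ENNReal.ofReal_mul (le_of_lt hwT),
      ← ENNReal.ofReal_add (mul_nonneg (BLaux.BLP_nonneg I M) (le_of_lt hhT))
        (mul_nonneg (le_of_lt hwT) (le_of_lt hhT)),
      ENNReal.toReal_ofReal (add_nonneg (mul_nonneg (BLaux.BLP_nonneg I M) (le_of_lt hhT))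
        (mul_nonneg (le_of_lt hwT) (le_of_lt hhT)))]
  rw [hexp] at hmono
  have hfinal : I.W * (I.r iT).h ≤ BLaux.BLP I M * (I.r iT).h + (I.r iT).w * (I.r iT).h := by
    nlinarith [mul_le_mul_of_nonneg_right (le_of_lt hPMW) (le_of_lt hhT)]
  linarith
end
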